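/- arXiv:1601.04850 — 8 statements merged into one kernel-verified Lean document; each statement's English description precedes it below -/
import Mathlib

section
/- There exists an absolute constant C > 0 such that for every integer n ≥ 2 the following holds. Let P(z) = Σ_{k=0}^n λ_k z^k be a random polynomial whose coefficients λ_0,…,λ_n are independent identically distributed complex random variables whose common law assigns probability 0 to {0}. Then 𝔼[V(P)] ≤ C log n. -/
/-!
A vertex `ν` of the Newton–Hadamard polygon is a strict maximum of `|λ_k|` among the indices
`k ≤ ν` or among the indices `k ≥ ν`: if coefficients on both sides were at least `|λ_ν|`, the
radius `r` at which `ν` is the last maximiser of `|λ_k| r^k` could be neither `≥ 1` nor `< 1`.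
For i.i.d. coefficients the law of any `m` of them is exchangeable, so a given one is their
strict maximum with probability at most `1/m`. Hence `𝔼[V(P)] ≤ 2 H_{n+1} ≤ 2 (1 + log (n + 1))`,
which is at most `7 log n` for `n ≥ 2`.
-/

open MeasureTheory ProbabilityTheory

/-- `V(P)`: the number of vertices of the Newton–Hadamard polygon, i.e. the number of
indices `ν` such that for some `r ∈ (0,∞)`, `ν` is the largest index with
`|λ_ν| r^ν = max_k |λ_k| r^k`. -/
noncomputable def Vcount {n : ℕ} (lam : Fin (n + 1) → ℂ) : ℕ :=
  Finset.card (@Finset.filter (Fin (n + 1))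
    (fun ν => ∃ r : ℝ, 0 < r ∧
      (∀ k : Fin (n + 1),
        ‖lam k‖ * r ^ (k : ℕ) ≤ ‖lam ν‖ * r ^ (ν : ℕ)) ∧
      (∀ k : Fin (n + 1),
        ‖lam k‖ * r ^ (k : ℕ) = ‖lam ν‖ * r ^ (ν : ℕ) → k ≤ ν))
    (Classical.decPred _) Finset.univ)

open scoped ENNReal
open Finset Function

section StrictArgmax

variable {ι α : Type*}

def strictArgmaxSet (f : α → ℝ) (s : Finset ι) (j : ι) : Set (ι → α) :=
  {x | ∀ i ∈ s, i ≠ j → f (x i) < f (x j)}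

lemma measurableSet_strictArgmaxSet [MeasurableSpace α] [Countable ι] {f : α → ℝ}
    (hf : Measurable f) (s : Finset ι) (j : ι) : MeasurableSet (strictArgmaxSet f s j) := by
  simp only [strictArgmaxSet, Set.ofPred_forall]
  exact .iInter fun i => .iInter fun _ => .iInter fun _ =>
    measurableSet_lt (hf.comp (measurable_pi_apply i)) (hf.comp (measurable_pi_apply j))

lemma pairwise_disjoint_strictArgmaxSet_univ [Fintype ι] (f : α → ℝ) :
    Pairwise (Disjoint on strictArgmaxSet f (univ : Finset ι)) :=
  fun j k hjk => Set.disjoint_left.2 fun _ hj hk =>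
    (hj k (mem_univ k) hjk.symm).not_gt (hk j (mem_univ j) hjk)

lemma preimage_piCongrLeft_swap_strictArgmaxSet_univ [MeasurableSpace α] [Fintype ι]
    [DecidableEq ι] (f : α → ℝ) (j k : ι) :
    MeasurableEquiv.piCongrLeft (fun _ => α) (Equiv.swap j k) ⁻¹' strictArgmaxSet f univ k =
      strictArgmaxSet f univ j := by
  ext x
  have hx : ∀ i, MeasurableEquiv.piCongrLeft (fun _ => α) (Equiv.swap j k) x (Equiv.swap j k i)
      = x i := fun i => by simp [MeasurableEquiv.coe_piCongrLeft]
  simp only [strictArgmaxSet, Set.mem_preimage, Set.mem_ofPred_eq, mem_univ, true_implies]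
  rw [← (Equiv.swap j k).forall_congr_right]
  have hk : MeasurableEquiv.piCongrLeft (fun _ => α) (Equiv.swap j k) x k = x j := by
    simpa using hx j
  simp only [hx, hk, ne_eq, Equiv.swap_apply_eq_iff, Equiv.swap_apply_right]

lemma measure_pi_strictArgmaxSet_univ_le [MeasurableSpace α] [Fintype ι] (m : Measure α)
    [IsProbabilityMeasure m] {f : α → ℝ} (hf : Measurable f) (j : ι) :
    Measure.pi (fun _ : ι => m) (strictArgmaxSet f univ j) ≤ (Fintype.card ι : ℝ≥0∞)⁻¹ := by
  classical
  set π := Measure.pi (fun _ : ι => m)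
  have hmeas k := measurableSet_strictArgmaxSet hf (univ : Finset ι) k
  have heq : ∀ k, π (strictArgmaxSet f univ k) = π (strictArgmaxSet f univ j) := fun k => by
    rw [← preimage_piCongrLeft_swap_strictArgmaxSet_univ f k j,
      (measurePreserving_piCongrLeft (fun _ => m) (Equiv.swap k j)).measure_preimage
        (hmeas j).nullMeasurableSet]
  have hsum : ∑ k, π (strictArgmaxSet f univ k) ≤ 1 := by
    rw [← tsum_fintype (L := SummationFilter.unconditional _),
      ← measure_iUnion (pairwise_disjoint_strictArgmaxSet_univ f) hmeas]
    exact prob_le_one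
  rw [ENNReal.le_inv_iff_mul_le, mul_comm]
  simpa [heq] using hsum

lemma measure_strictArgmaxSet_le_inv_card {Ω : Type*} [MeasurableSpace Ω] [MeasurableSpace α]
    {μ : Measure Ω} {X : ι → Ω → α} (hXm : ∀ i, Measurable (X i)) (hX : iIndepFun X μ)
    {m : Measure α} (hident : ∀ i, μ.map (X i) = m) {f : α → ℝ} (hf : Measurable f)
    {s : Finset ι} {j : ι} (hj : j ∈ s) :
    μ ((fun ω i => X i ω) ⁻¹' strictArgmaxSet f s j) ≤ (#s : ℝ≥0∞)⁻¹ := by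
  have := hX.isProbabilityMeasure
  have : IsProbabilityMeasure m := hident j ▸ Measure.isProbabilityMeasure_map (hXm j).aemeasurable
  have hjoint : μ.map (fun ω (i : s) => X i ω) = Measure.pi fun _ => m := by
    rw [iIndepFun.map_fun_eq_pi_map (f := fun i : s => X i) (fun i => (hXm i).aemeasurable)
      (hX.precomp Subtype.val_injective)]
    simp only [hident]
  have hpre : (fun ω i => X i ω) ⁻¹' strictArgmaxSet f s j =
      (fun ω (i : s) => X i ω) ⁻¹' strictArgmaxSet f univ ⟨j, hj⟩ := by
    ext ω
    simp [strictArgmaxSet, Subtype.forall, Subtype.ext_iff]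
  rw [hpre, ← Measure.map_apply (measurable_pi_lambda (fun ω (i : s) => X i ω) fun i => hXm i)
    (measurableSet_strictArgmaxSet hf (univ : Finset s) _), hjoint, ← Fintype.card_coe s]
  exact measure_pi_strictArgmaxSet_univ_le m hf _

end StrictArgmax

lemma forall_lt_left_or_right_of_max_mul_pow {n : ℕ} {a : Fin (n + 1) → ℝ} (ha : ∀ k, 0 ≤ a k)
    {ν : Fin (n + 1)} {r : ℝ} (hr : 0 < r) (hmax : ∀ k, a k * r ^ (k : ℕ) ≤ a ν * r ^ (ν : ℕ))
    (hlast : ∀ k, a k * r ^ (k : ℕ) = a ν * r ^ (ν : ℕ) → k ≤ ν) :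
    (∀ i < ν, a i < a ν) ∨ ∀ j, ν < j → a j < a ν := by
  by_contra! ⟨⟨i, hiν, hi⟩, ⟨j, hνj, hj⟩⟩
  have hj_lt : a j * r ^ (j : ℕ) < a ν * r ^ (ν : ℕ) :=
    (hmax j).lt_of_ne fun h => (hlast j h).not_gt hνj
  rcases le_or_gt 1 r with hr1 | hr1
  · have : a ν * r ^ (ν : ℕ) ≤ a j * r ^ (j : ℕ) :=
      (mul_le_mul_of_nonneg_left (pow_le_pow_right₀ hr1 hνj.le) (ha ν)).trans
        (mul_le_mul_of_nonneg_right hj (by positivity))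
    exact this.not_gt hj_lt
  · have haν : 0 < a ν :=
      pos_of_mul_pos_left ((mul_nonneg (ha j) (by positivity)).trans_lt hj_lt) (by positivity)
    have : a ν * r ^ (ν : ℕ) < a i * r ^ (i : ℕ) :=
      (mul_lt_mul_of_pos_left (pow_lt_pow_right_of_lt_one₀ hr hr1 hiν) haν).trans_le
        (mul_le_mul_of_nonneg_right hi (by positivity))
    exact this.not_ge (hmax i)

open Classical in
lemma Vcount_le_card_add_card {n : ℕ} (x : Fin (n + 1) → ℂ) :
    Vcount x ≤ #{ν | x ∈ strictArgmaxSet (‖·‖) (Iic ν) ν} +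
      #{ν | x ∈ strictArgmaxSet (‖·‖) (Ici ν) ν} := by
  refine (card_le_card fun ν hν => ?_).trans (card_union_le _ _)
  obtain ⟨r, hr, hmax, hlast⟩ := (mem_filter.1 hν).2
  rcases forall_lt_left_or_right_of_max_mul_pow (fun k => norm_nonneg (x k)) hr hmax hlast
    with h | h
  · refine mem_union_left _ (mem_filter.2 ⟨mem_univ _, fun i hi hiν => h i ?_⟩)
    exact lt_of_le_of_ne (mem_Iic.1 hi) hiν
  · refine mem_union_right _ (mem_filter.2 ⟨mem_univ _, fun i hi hiν => h i ?_⟩)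
    exact lt_of_le_of_ne (mem_Ici.1 hi) (Ne.symm hiν)

section Counting

variable {Ω ι : Type*} [Fintype ι]

open Classical in
lemma card_filter_mem_eq_sum_indicator (A : ι → Set Ω) (ω : Ω) :
    (#{i | ω ∈ A i} : ℝ≥0∞) = ∑ i, (A i).indicator 1 ω := by
  simp only [card_filter, Nat.cast_sum, Nat.cast_ite, Nat.cast_one, Nat.cast_zero,
    Set.indicator_apply, Pi.one_apply]

open Classical in
lemma measurable_card_filter_mem [MeasurableSpace Ω] {A : ι → Set Ω}
    (hA : ∀ i, MeasurableSet (A i)) :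
    Measurable fun ω => (#{i | ω ∈ A i} : ℝ≥0∞) := by
  simp_rw [card_filter_mem_eq_sum_indicator]
  exact Finset.measurable_sum _ fun i _ => measurable_one.indicator (hA i)

open Classical in
lemma lintegral_card_filter_mem [MeasurableSpace Ω] (μ : Measure Ω) {A : ι → Set Ω}
    (hA : ∀ i, MeasurableSet (A i)) :
    ∫⁻ ω, (#{i | ω ∈ A i} : ℝ≥0∞) ∂μ = ∑ i, μ (A i) := by
  simp_rw [card_filter_mem_eq_sum_indicator]
  rw [lintegral_finsetSum _ fun i _ => measurable_one.indicator (hA i)]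
  simp [lintegral_indicator_one (hA _)]

end Counting

lemma Fin.sum_comp_card_Ici_eq_sum_comp_card_Iic {M : Type*} [AddCommMonoid M] (n : ℕ)
    (g : ℕ → M) :
    ∑ ν : Fin n, g #(Ici ν) = ∑ ν : Fin n, g #(Iic ν) :=
  Fintype.sum_equiv Fin.revPerm _ _ fun ν => by
    rw [Fin.revPerm_apply, ← Fin.map_revPerm_Ici, card_map]

lemma sum_inv_card_Iic_eq_harmonic (n : ℕ) :
    ∑ ν : Fin n, (#(Iic ν) : ℝ≥0∞)⁻¹ = ENNReal.ofReal (harmonic n) := by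
  rw [harmonic, Rat.cast_sum, ENNReal.ofReal_sum_of_nonneg fun _ _ => by positivity,
    ← Fin.sum_univ_eq_sum_range]
  refine Fintype.sum_congr _ _ fun ν => ?_
  rw [Fin.card_Iic, Rat.cast_inv, Rat.cast_natCast, ENNReal.ofReal_inv_of_pos (by positivity),
    ENNReal.ofReal_natCast]

lemma two_mul_harmonic_succ_le {n : ℕ} (hn : 2 ≤ n) :
    2 * (harmonic (n + 1) : ℝ) ≤ 7 * Real.log n := by
  have h2n : (2 : ℝ) ≤ n := by exact_mod_cast hn
  have hlog2 : 2 / 3 < Real.log 2 := by linarith [Real.log_two_gt_d9]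
  have hlog_succ : Real.log (n + 1 : ℕ) ≤ 2 * Real.log n := calc
    Real.log (n + 1 : ℕ) ≤ Real.log ((n : ℝ) ^ 2) :=
      Real.log_le_log (by positivity) (by push_cast; nlinarith)
    _ = 2 * Real.log n := by simp [Real.log_pow]
  linarith [harmonic_le_one_add_log (n + 1), Real.log_le_log (by norm_num) h2n]

open Classical in
lemma lintegral_Vcount_le_two_mul_harmonic {Ω : Type*} [MeasurableSpace Ω] {μ : Measure Ω}
    {n : ℕ} {lam : Ω → Fin (n + 1) → ℂ} (hmeas : ∀ k, Measurable fun ω => lam ω k)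
    (hindep : iIndepFun (fun k ω => lam ω k) μ)
    (hident : ∀ k, μ.map (fun ω => lam ω k) = μ.map (fun ω => lam ω 0)) :
    ∫⁻ ω, (Vcount (lam ω) : ℝ≥0∞) ∂μ ≤ ENNReal.ofReal (2 * harmonic (n + 1)) := by
  set A : Fin (n + 1) → Set Ω := fun ν => lam ⁻¹' strictArgmaxSet (‖·‖) (Iic ν) ν
  set B : Fin (n + 1) → Set Ω := fun ν => lam ⁻¹' strictArgmaxSet (‖·‖) (Ici ν) ν
  have hlam : Measurable lam := measurable_pi_lambda _ hmeas
  have hA ν : MeasurableSet (A ν) := hlam (measurableSet_strictArgmaxSet measurable_norm _ _)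
  have hB ν : MeasurableSet (B ν) := hlam (measurableSet_strictArgmaxSet measurable_norm _ _)
  calc ∫⁻ ω, (Vcount (lam ω) : ℝ≥0∞) ∂μ
      ≤ ∫⁻ ω, ((#{ν | ω ∈ A ν} : ℝ≥0∞) + #{ν | ω ∈ B ν}) ∂μ :=
        lintegral_mono fun ω =>
          (Nat.cast_le.2 (Vcount_le_card_add_card (lam ω))).trans_eq (Nat.cast_add _ _)
    _ = ∑ ν, μ (A ν) + ∑ ν, μ (B ν) := by
        rw [lintegral_add_left (measurable_card_filter_mem hA), lintegral_card_filter_mem μ hA,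
          lintegral_card_filter_mem μ hB]
    _ ≤ ∑ ν, (#(Iic ν) : ℝ≥0∞)⁻¹ + ∑ ν, (#(Ici ν) : ℝ≥0∞)⁻¹ :=
        add_le_add
          (sum_le_sum fun ν _ => measure_strictArgmaxSet_le_inv_card hmeas hindep hident
            measurable_norm (mem_Iic.2 le_rfl))
          (sum_le_sum fun ν _ => measure_strictArgmaxSet_le_inv_card hmeas hindep hident
            measurable_norm (mem_Ici.2 le_rfl))
    _ = ENNReal.ofReal (2 * harmonic (n + 1)) := by
        rw [Fin.sum_comp_card_Ici_eq_sum_comp_card_Iic (n + 1) fun c => (c : ℝ≥0∞)⁻¹,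
          sum_inv_card_Iic_eq_harmonic, ← two_mul, ENNReal.ofReal_mul zero_le_two,
          ENNReal.ofReal_ofNat]

/-- **Lemma.** There is an absolute constant `C > 0` such that for every `n ≥ 2` and every
random polynomial `P(z) = ∑_{k=0}^n λ_k z^k` with i.i.d. complex coefficients whose common
law assigns probability `0` to `{0}`, one has `𝔼[V(P)] ≤ C log n`. -/
theorem expected_newton_hadamard_vertices :
    ∃ C : ℝ, 0 < C ∧
      ∀ (n : ℕ), 2 ≤ n →
      ∀ (Ω : Type) (_ : MeasurableSpace Ω) (μ : Measure Ω), IsProbabilityMeasure μ →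
      ∀ lam : Ω → Fin (n + 1) → ℂ,
        (∀ k, Measurable fun ω => lam ω k) →
        iIndepFun (fun k ω => lam ω k) μ →
        (∀ k, Measure.map (fun ω => lam ω k) μ = Measure.map (fun ω => lam ω 0) μ) →
        Measure.map (fun ω => lam ω 0) μ {0} = 0 →
        ∫⁻ ω, (Vcount (lam ω) : ENNReal) ∂μ ≤ ENNReal.ofReal (C * Real.log n) :=
  ⟨7, by norm_num, fun _ hn _ _ _ _ _ hmeas hindep hident _ =>
    (lintegral_Vcount_le_two_mul_harmonic hmeas hindep hident).trans
      (ENNReal.ofReal_le_ofReal (two_mul_harmonic_succ_le hn))⟩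
end

section
/- Suppose the ℂ^{n+1}-valued random vector λ has property (Θ). Then for every Borel set Λ ⊂ ℂ^{n+1} and every ε > 0 there exist complex numbers (υ_k^+)_{k=0}^n, (υ_k^-)_{k=0}^n and a point a ∈ ℂ with |υ_k^+ − υ_k^-| ≥ ½(|υ_k^+ − a| + |υ_k^- − a|) for every k ∈ {0,…,n}, such that ℙ{λ ∈ Λ} ≤ ε + 2^{−(n+1)} · #{ σ ∈ {+,−}^{n+1} : (υ_0^{σ_0},…,υ_n^{σ_n}) ∈ Λ }. -/
/-!
Flip-invariance makes each of the `2^(n+1)` mixed vectors `λ^σ` distributed like `λ`, so the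
expected number of `σ` with `λ^σ ∈ Λ` is `2^(n+1) ℙ{λ ∈ Λ}`. By the first moment method some
outcome `ω` outside the null set where (Θ) fails sees at least this many; take `υ^+ := λ'(ω)`,
`υ^- := λ''(ω)`.
-/

open MeasureTheory

/-- Property (Θ): there exist `λ'`, `λ''`, each equidistributed with `λ`, whose joint law
is flip-invariant (all the mixed vectors `λ^σ` are equidistributed with `λ`), and a point
`a ∈ ℂ` such that almost surely
`|λ_k^{σ_k} − λ_k^{−σ_k}| ≥ ½(|λ_k^{σ_k} − a| + |λ_k^{−σ_k} − a|)` for all `k`, `σ_k`. -/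
def HasPropertyTheta {Ω : Type} [MeasurableSpace Ω] (μ : Measure Ω) {n : ℕ}
    (lam : Ω → Fin (n + 1) → ℂ) : Prop :=
  ∃ (lam' lam'' : Ω → Fin (n + 1) → ℂ) (a : ℂ),
    Measurable lam' ∧ Measurable lam'' ∧
    (∀ σ : Fin (n + 1) → Bool,
      Measure.map (fun ω k => if σ k then lam' ω k else lam'' ω k) μ = Measure.map lam μ) ∧
    (∀ᵐ ω ∂μ, ∀ k : Fin (n + 1),
      (1 / 2) * (‖lam' ω k - a‖ + ‖lam'' ω k - a‖) ≤
        ‖lam' ω k - lam'' ω k‖)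

open Finset ProbabilityTheory

section FirstMoment

variable {Ω E ι : Type*} [MeasurableSpace Ω] [MeasurableSpace E] [Fintype ι]
  {μ : Measure Ω} {X : ι → Ω → E} {s : Set E}

open Classical in
theorem lintegral_card_filter_mem_s6 (hX : ∀ i, Measurable (X i)) (hs : MeasurableSet s) :
    ∫⁻ ω, (#{i | X i ω ∈ s} : ENNReal) ∂μ = ∑ i, μ (X i ⁻¹' s) := by
  have hcount (ω : Ω) : (#{i | X i ω ∈ s} : ENNReal) = ∑ i, (X i ⁻¹' s).indicator 1 ω := by
    simp only [natCast_card_filter, Set.indicator_apply, Set.mem_preimage, Pi.one_apply]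
  simp only [hcount]
  rw [lintegral_finsetSum _ fun i _ => measurable_one.indicator (hX i hs)]
  exact sum_congr rfl fun i _ => lintegral_indicator_one (hX i hs)

open Classical in
theorem exists_sum_measure_preimage_le_card_filter_mem_of_ae [IsProbabilityMeasure μ]
    (hX : ∀ i, Measurable (X i)) (hs : MeasurableSet s) {P : Ω → Prop} (hP : ∀ᵐ ω ∂μ, P ω) :
    ∃ ω, P ω ∧ ∑ i, μ (X i ⁻¹' s) ≤ #{i | X i ω ∈ s} := by
  have hfin : ∫⁻ ω, (#{i | X i ω ∈ s} : ENNReal) ∂μ ≠ ⊤ := by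
    rw [lintegral_card_filter_mem_s6 hX hs]
    exact ENNReal.sum_ne_top.2 fun i _ => measure_ne_top μ _
  obtain ⟨ω, hω, hle⟩ := exists_notMem_null_lintegral_le hfin (ae_iff.1 hP)
  exact ⟨ω, not_not.1 hω, lintegral_card_filter_mem_s6 hX hs ▸ hle⟩

end FirstMoment

theorem measurable_pi_ite {Ω ι α : Type*} [MeasurableSpace Ω] [MeasurableSpace α]
    (σ : ι → Bool) {x y : Ω → ι → α} (hx : Measurable x) (hy : Measurable y) :
    Measurable fun ω k => if σ k then x ω k else y ω k :=
  measurable_pi_lambda _ fun k => by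
    cases σ k
    exacts [hy.eval, hx.eval]

/-- **The reduction principle.** If the coefficient vector `λ` has property (Θ), then for
every Borel set `Λ ⊂ ℂ^{n+1}` and every `ε > 0` there are complex numbers `(υ_k^±)` and a
point `a` satisfying `|υ_k^+ − υ_k^-| ≥ ½(|υ_k^+ − a| + |υ_k^- − a|)` for all `k`, such
that `ℙ{λ ∈ Λ} ≤ ε + 2^{−(n+1)} #{σ ∈ {+,−}^{n+1} : υ^σ ∈ Λ}`. -/
theorem reduction_principle (n : ℕ)
    (Ω : Type) (_ : MeasurableSpace Ω) (μ : Measure Ω) (_ : IsProbabilityMeasure μ)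
    (lam : Ω → Fin (n + 1) → ℂ) (hmeas : Measurable lam)
    (hTheta : HasPropertyTheta μ lam)
    (Λ : Set (Fin (n + 1) → ℂ)) (hΛ : MeasurableSet Λ) (ε : ℝ) :
    ∃ (upsP upsM : Fin (n + 1) → ℂ) (a : ℂ),
      (∀ k : Fin (n + 1),
        (1 / 2) * (‖upsP k - a‖ + ‖upsM k - a‖) ≤
          ‖upsP k - upsM k‖) ∧
      μ (lam ⁻¹' Λ) ≤ ENNReal.ofReal ε +
        (Finset.card (@Finset.filter (Fin (n + 1) → Bool)
          (fun σ => (fun k => if σ k then upsP k else upsM k) ∈ Λ)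
          (Classical.decPred _) Finset.univ) : ENNReal) / 2 ^ (n + 1) := by
  obtain ⟨lam', lam'', a, hm', hm'', hflip, hae⟩ := hTheta
  have hlaw (σ : Fin (n + 1) → Bool) :
      μ ((fun ω k => if σ k then lam' ω k else lam'' ω k) ⁻¹' Λ) = μ (lam ⁻¹' Λ) :=
    IdentDistrib.measure_mem_eq
      ⟨(measurable_pi_ite σ hm' hm'').aemeasurable, hmeas.aemeasurable, hflip σ⟩ hΛ
  obtain ⟨ω, hω, hcount⟩ := exists_sum_measure_preimage_le_card_filter_mem_of_ae
    (fun σ => measurable_pi_ite σ hm' hm'') hΛ hae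
  refine ⟨lam' ω, lam'' ω, a, hω, le_add_left ?_⟩
  rw [ENNReal.le_div_iff_mul_le (by simp) (by simp), mul_comm]
  simpa [hlaw, Fintype.card_fun] using hcount
end

section
/- There exists an absolute constant b > 0 such that the following holds. Let m ≥ 1, let ℓ_1,…,ℓ_m be pairwise distinct integers, let a_1,…,a_m ∈ ℂ, and let p(t) = Σ_{k=1}^m a_k e^{i ℓ_k t}. Then for every interval I ⊂ ℝ of length 0 < |I| ≤ 2π, max_{t∈I} |p(t)| ≥ (b|I|)^{m−1} · Σ_{k=1}^m |a_k|. -/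
/-!
Write `P(t) = ∑ a_k e^{iℓ_k t}`. By orthogonality every `|a_k|` is at most `|P(t₀)|`, where `t₀`
maximises `|P|` over a period. Put `δ = |I| / m` and `z_k = e^{iℓ_k δ}`. If `Q = ∑_ν c_ν X^ν` has
`Q(z_k) = 1` for all `k`, then `P(s) = ∑_ν c_ν P(s + νδ)`; choosing `s ≡ t₀ (mod 2π)` and `Q`
supported in `(M, M + m]` with `Mδ ≈ α - s ≤ 2π`, all the nodes `s + νδ` lie in `I = [α, β]`.
Such a `Q` is `1 - h g` with `h = ∏ (z_k - X)` and `g = h⁻¹ mod X^{M+1}`. Since `|z_k| = 1`, the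
coefficients of `h` and of `h⁻¹` are dominated by those of `(1 + X)^m` and `(1 - X)^{-m}`, so
`∑ |c_ν| ≤ m 2^m C(M + 2m - 1, m - 1)`, which is at most `(C / |I|)^{m - 1}` as `M ≲ m / |I|`.
-/

open Real Polynomial Finset
open scoped PowerSeries

section Majorant

variable {R : Type*} [SeminormedCommRing R]

theorem PowerSeries.norm_coeff_mul_le_coeff_mul {f g : R⟦X⟧} {F G : ℝ⟦X⟧}
    (hf : ∀ n, ‖coeff n f‖ ≤ coeff n F) (hg : ∀ n, ‖coeff n g‖ ≤ coeff n G) (n : ℕ) :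
    ‖coeff n (f * g)‖ ≤ coeff n (F * G) := by
  simp only [PowerSeries.coeff_mul]
  refine (norm_sum_le _ _).trans (sum_le_sum fun p _ => (norm_mul_le _ _).trans ?_)
  exact mul_le_mul (hf _) (hg _) (norm_nonneg _) ((norm_nonneg _).trans (hf _))

theorem PowerSeries.norm_coeff_prod_le_coeff_prod [NormOneClass R] {ι : Type*} (s : Finset ι)
    {f : ι → R⟦X⟧} {F : ι → ℝ⟦X⟧} (h : ∀ i ∈ s, ∀ n, ‖coeff n (f i)‖ ≤ coeff n (F i))
    (n : ℕ) : ‖coeff n (∏ i ∈ s, f i)‖ ≤ coeff n (∏ i ∈ s, F i) := by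
  classical
  induction s using Finset.induction_on generalizing n with
  | empty => by_cases hn : n = 0 <;> simp [PowerSeries.coeff_one, hn]
  | insert i s hi ih =>
    rw [prod_insert hi, prod_insert hi]
    exact PowerSeries.norm_coeff_mul_le_coeff_mul (h i (mem_insert_self i s))
      (ih fun j hj => h j (mem_insert_of_mem hj)) n

end Majorant

theorem Nat.sum_range_choose_le (n k : ℕ) : ∑ i ∈ range k, n.choose i ≤ 2 ^ n := by
  rw [← Nat.sum_range_choose]
  refine sum_le_sum_of_ne_zero fun i _ hi => mem_range.2 ?_
  by_contra! h
  exact hi (Nat.choose_eq_zero_of_lt (by omega))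

theorem PowerSeries.coeff_one_add_X_pow_mul_mk_one_pow_le (n ν : ℕ) :
    coeff ν ((1 + X) ^ (n + 1) * mk 1 ^ (n + 1) : ℝ⟦X⟧) ≤ 2 ^ (n + 1) * (n + ν).choose n := by
  have h1X : ((1 + X) ^ (n + 1) : ℝ⟦X⟧) = ((1 + Polynomial.X) ^ (n + 1) : ℝ[X]) := by
    simp [Polynomial.coe_pow]
  rw [mk_one_pow_eq_mk_choose_add, h1X, coeff_mul]
  simp only [Polynomial.coeff_coe, coeff_one_add_X_pow, coeff_mk]
  norm_cast
  calc ∑ p ∈ antidiagonal ν, (n + 1).choose p.1 * (n + p.2).choose n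
      ≤ ∑ p ∈ antidiagonal ν, (n + 1).choose p.1 * (n + ν).choose n := by
        gcongr with p hp
        have := mem_antidiagonal.1 hp
        omega
    _ = (∑ i ∈ range (ν + 1), (n + 1).choose i) * (n + ν).choose n := by
        rw [← sum_mul, Nat.sum_antidiagonal_eq_sum_range_succ_mk]
    _ ≤ 2 ^ (n + 1) * (n + ν).choose n := by
        gcongr
        exact Nat.sum_range_choose_le _ _

theorem Polynomial.exists_mem_support_norm_sum_smul_le {𝕜 E : Type*} [NormedRing 𝕜]
    [SeminormedAddCommGroup E] [Module 𝕜 E] [NormSMulClass 𝕜 E] {Q : 𝕜[X]} (hQ : Q ≠ 0)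
    (f : ℕ → E) :
    ∃ ν ∈ Q.support, ‖Q.sum fun n c => c • f n‖ ≤ (∑ μ ∈ Q.support, ‖Q.coeff μ‖) * ‖f ν‖ := by
  obtain ⟨ν, hν, hmax⟩ := Q.support.exists_max_image (‖f ·‖) (support_nonempty.2 hQ)
  refine ⟨ν, hν, (norm_sum_le _ _).trans ?_⟩
  rw [sum_mul]
  gcongr with μ hμ
  rw [norm_smul]
  gcongr
  exact hmax μ hμ

theorem Nat.choose_le_exp_one_mul_div_pow (N n : ℕ) : (N.choose n : ℝ) ≤ (exp 1 * N / n) ^ n := by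
  rcases n.eq_zero_or_pos with rfl | hn
  · simp
  have hn' : (0 : ℝ) < n := by exact_mod_cast hn
  calc (N.choose n : ℝ) ≤ N ^ n / n.factorial := Nat.choose_le_pow_div n N
    _ = (N / n) ^ n * (n ^ n / n.factorial) := by rw [div_pow]; field_simp
    _ ≤ (N / n) ^ n * exp n := by gcongr; exact pow_div_factorial_le_exp _ hn'.le n
    _ = (exp 1 * N / n) ^ n := by
      rw [← exp_one_pow, mul_comm, mul_div_assoc, mul_pow]

section TuranPoly

variable {𝕜 : Type*} [NormedField 𝕜] {ι : Type*} [Fintype ι]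

-- `1 - h * g` with `h = ∏ k, (z k - X)` and `g = h⁻¹ mod X ^ (M + 1)`: it is `1` at each `z k`
-- and divisible by `X ^ (M + 1)`.
noncomputable def turanPoly (z : ι → 𝕜ˣ) (M : ℕ) : 𝕜[X] :=
  1 - (∏ k, (C (z k : 𝕜) - X)) * PowerSeries.trunc (M + 1) (∏ k, PowerSeries.invUnitsSub (z k))

variable (z : ι → 𝕜ˣ) (M : ℕ)

theorem coe_turanPoly :
    (turanPoly z M : 𝕜⟦X⟧) = (∏ k, (PowerSeries.C (z k : 𝕜) - PowerSeries.X)) *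
      (∏ k, PowerSeries.invUnitsSub (z k) -
        PowerSeries.trunc (M + 1) (∏ k, PowerSeries.invUnitsSub (z k)) : 𝕜⟦X⟧) := by
  have hh : ((∏ k, (C (z k : 𝕜) - X) : 𝕜[X]) : 𝕜⟦X⟧) =
      ∏ k, (PowerSeries.C (z k : 𝕜) - PowerSeries.X) := by
    simp only [← Polynomial.coeToPowerSeries.ringHom_apply, map_prod, map_sub]
    simp
  have hinv : (∏ k, (PowerSeries.C (z k : 𝕜) - PowerSeries.X)) *
      ∏ k, PowerSeries.invUnitsSub (z k) = 1 := by
    rw [← prod_mul_distrib]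
    exact prod_eq_one fun k _ => by rw [mul_comm, PowerSeries.invUnitsSub_mul_sub]
  simp [turanPoly, hh, mul_sub, hinv]

theorem eval_turanPoly (k : ι) : (turanPoly z M).eval (z k : 𝕜) = 1 := by
  simp [turanPoly, eval_prod, prod_eq_zero (mem_univ k)]

theorem support_turanPoly_subset : (turanPoly z M).support ⊆ Ioc M (M + Fintype.card ι) := by
  intro ν hν
  have hlow : PowerSeries.X ^ (M + 1) ∣ (∏ k, PowerSeries.invUnitsSub (z k) -
      PowerSeries.trunc (M + 1) (∏ k, PowerSeries.invUnitsSub (z k)) : 𝕜⟦X⟧) :=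
    PowerSeries.X_pow_dvd_iff.2 fun m hm => by simp [PowerSeries.coeff_trunc, hm]
  have hdeg_h : (∏ k, (C (z k : 𝕜) - X)).natDegree ≤ Fintype.card ι := by
    refine (natDegree_prod_le _ _).trans ?_
    simp only [← neg_sub X, natDegree_neg, natDegree_X_sub_C, sum_const, card_univ]
    simp
  have hdeg_trunc := PowerSeries.natDegree_trunc_lt (∏ k, PowerSeries.invUnitsSub (z k)) M
  have hdeg : (turanPoly z M).natDegree ≤ M + Fintype.card ι :=
    (natDegree_sub_le _ _).trans (max_le (by simp) (natDegree_mul_le.trans (by omega)))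
  refine mem_Ioc.2 ⟨lt_of_not_ge fun hνM => mem_support_iff.1 hν ?_,
    (le_natDegree_of_mem_supp ν hν).trans hdeg⟩
  rw [← Polynomial.coeff_coe, coe_turanPoly]
  exact PowerSeries.X_pow_dvd_iff.1 (hlow.mul_left _) ν (by omega)

variable {z} {n : ℕ} (hz : ∀ k, ‖(z k : 𝕜)‖ = 1) (hι : Fintype.card ι = n + 1)
include hz hι

theorem norm_coeff_turanPoly_le (ν : ℕ) :
    ‖(turanPoly z M).coeff ν‖ ≤ 2 ^ (n + 1) * (n + ν).choose n := by
  have hh (m : ℕ) : ‖PowerSeries.coeff m (∏ k, (PowerSeries.C (z k : 𝕜) - PowerSeries.X))‖ ≤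
      PowerSeries.coeff m ((1 + PowerSeries.X) ^ (n + 1) : ℝ⟦X⟧) := by
    rw [← hι, ← card_univ, ← prod_const]
    refine PowerSeries.norm_coeff_prod_le_coeff_prod _ (fun k _ m => ?_) m
    rcases m with _ | _ | m <;> simp [PowerSeries.coeff_X, hz]
  have hG (m : ℕ) : ‖PowerSeries.coeff m (∏ k, PowerSeries.invUnitsSub (z k))‖ ≤
      PowerSeries.coeff m (PowerSeries.mk 1 ^ (n + 1) : ℝ⟦X⟧) := by
    rw [← hι, ← card_univ, ← prod_const]
    refine PowerSeries.norm_coeff_prod_le_coeff_prod _ (fun k _ m => ?_) m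
    simp [PowerSeries.coeff_invUnitsSub, hz]
  have hG_sub_trunc (m : ℕ) : ‖PowerSeries.coeff m (∏ k, PowerSeries.invUnitsSub (z k) -
      PowerSeries.trunc (M + 1) (∏ k, PowerSeries.invUnitsSub (z k)) : 𝕜⟦X⟧)‖ ≤
      PowerSeries.coeff m (PowerSeries.mk 1 ^ (n + 1) : ℝ⟦X⟧) := by
    by_cases hm : m < M + 1
    · simpa [PowerSeries.coeff_trunc, hm] using (norm_nonneg _).trans (hG m)
    · simpa [PowerSeries.coeff_trunc, hm] using hG m
  rw [← Polynomial.coeff_coe, coe_turanPoly]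
  exact (PowerSeries.norm_coeff_mul_le_coeff_mul hh hG_sub_trunc ν).trans
    (PowerSeries.coeff_one_add_X_pow_mul_mk_one_pow_le n ν)

theorem sum_norm_coeff_turanPoly_le :
    ∑ ν ∈ (turanPoly z M).support, ‖(turanPoly z M).coeff ν‖ ≤
      (n + 1) * (2 ^ (n + 1) * (n + (M + n + 1)).choose n) := by
  have hsupp := support_turanPoly_subset z M
  rw [hι, ← add_assoc] at hsupp
  calc ∑ ν ∈ (turanPoly z M).support, ‖(turanPoly z M).coeff ν‖
      ≤ ∑ ν ∈ (turanPoly z M).support, (2 ^ (n + 1) * (n + (M + n + 1)).choose n : ℝ) := by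
        refine sum_le_sum fun ν hν => (norm_coeff_turanPoly_le M hz hι ν).trans ?_
        gcongr
        exact (mem_Ioc.1 (hsupp hν)).2
    _ ≤ (n + 1) * (2 ^ (n + 1) * (n + (M + n + 1)).choose n) := by
        rw [sum_const, nsmul_eq_mul]
        gcongr
        have := card_le_card hsupp
        rw [Nat.card_Ioc] at this
        exact_mod_cast this.trans (by omega)

end TuranPoly

section ExpSum

open Complex

variable {ι : Type*} [Fintype ι]

noncomputable def expSum (ℓ : ι → ℤ) (a : ι → ℂ) (t : ℝ) : ℂ :=
  ∑ k, a k * exp (I * ℓ k * t)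

variable (ℓ : ι → ℤ) (a : ι → ℂ)

theorem continuous_expSum : Continuous (expSum ℓ a) := by
  unfold expSum; fun_prop

theorem expSum_add_int_mul_two_pi (t : ℝ) (n : ℤ) :
    expSum ℓ a (t + n * (2 * π)) = expSum ℓ a t := by
  refine sum_congr rfl fun k _ => ?_
  have : exp (I * ℓ k * ↑(t + n * (2 * π))) =
      exp (I * ℓ k * t) * exp ((ℓ k * n : ℤ) * (2 * π * I)) := by
    rw [← Complex.exp_add]; push_cast; ring_nf
  rw [this, Complex.exp_int_mul_two_pi_mul_I, mul_one]

theorem expSum_add_nat_mul (t δ : ℝ) (ν : ℕ) :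
    expSum ℓ a (t + ν * δ) = ∑ k, a k * exp (I * ℓ k * t) * exp (I * ℓ k * δ) ^ ν := by
  refine sum_congr rfl fun k _ => ?_
  rw [← Complex.exp_nat_mul, mul_assoc (a k), ← Complex.exp_add]
  push_cast; ring_nf

theorem norm_expSum_of_unique [Unique ι] (t : ℝ) : ‖expSum ℓ a t‖ = ∑ k, ‖a k‖ := by
  simp [expSum, norm_exp]

theorem integral_exp_int_mul (n : ℤ) :
    ∫ t in (0 : ℝ)..2 * π, exp (I * n * t) = if n = 0 then ((2 * π : ℝ) : ℂ) else 0 := by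
  split_ifs with hn
  · simp [hn]
  · have hc : I * n ≠ 0 := mul_ne_zero I_ne_zero (by exact_mod_cast hn)
    rw [integral_exp_mul_complex hc]
    have : exp (I * n * ↑(2 * π)) = 1 := by
      rw [← Complex.exp_int_mul_two_pi_mul_I n]; push_cast; ring_nf
    simp only [this, ofReal_zero, mul_zero, Complex.exp_zero, sub_self, zero_div]

theorem integral_expSum_mul_exp_neg (hℓ : Function.Injective ℓ) (k : ι) :
    ∫ t in (0 : ℝ)..2 * π, expSum ℓ a t * exp (-(I * ℓ k * t)) = ((2 * π : ℝ) : ℂ) * a k := by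
  have hterm (j : ι) (t : ℝ) : a j * exp (I * ℓ j * t) * exp (-(I * ℓ k * t)) =
      a j * exp (I * ((ℓ j - ℓ k : ℤ) : ℂ) * t) := by
    rw [mul_assoc, ← Complex.exp_add]; push_cast; ring_nf
  simp only [expSum, sum_mul, hterm]
  rw [intervalIntegral.integral_finsetSum fun j _ =>
    (by fun_prop : Continuous _).intervalIntegrable _ _]
  simp only [intervalIntegral.integral_const_mul, integral_exp_int_mul]
  rw [sum_eq_single k (fun j _ hj => by simp [sub_eq_zero, hℓ.ne hj]) (by simp), sub_self,
    if_pos rfl, mul_comm]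

theorem norm_le_of_forall_norm_expSum_le (hℓ : Function.Injective ℓ) {C : ℝ}
    (hC : ∀ t ∈ Set.Icc 0 (2 * π), ‖expSum ℓ a t‖ ≤ C) (k : ι) : ‖a k‖ ≤ C := by
  have h2π : 0 < 2 * π := by positivity
  have hbound : ‖∫ t in (0 : ℝ)..2 * π, expSum ℓ a t * exp (-(I * ℓ k * t))‖ ≤ C * |2 * π - 0| := by
    refine intervalIntegral.norm_integral_le_of_norm_le_const fun t ht => ?_
    rw [Set.uIoc_of_le h2π.le] at ht
    simpa [norm_exp] using hC t (Set.Ioc_subset_Icc_self ht)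
  rw [integral_expSum_mul_exp_neg ℓ a hℓ, norm_mul, norm_real, norm_of_nonneg h2π.le, sub_zero,
    abs_of_pos h2π, mul_comm C] at hbound
  exact le_of_mul_le_mul_left hbound h2π

theorem exists_sum_norm_le_card_mul_norm_expSum (hℓ : Function.Injective ℓ) :
    ∃ t₀, ∑ k, ‖a k‖ ≤ Fintype.card ι * ‖expSum ℓ a t₀‖ := by
  obtain ⟨t₀, -, ht₀⟩ := (isCompact_Icc (a := 0) (b := 2 * π)).exists_isMaxOn
    (Set.nonempty_Icc.2 (by positivity)) (continuous_norm.comp (continuous_expSum ℓ a)).continuousOn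
  refine ⟨t₀, ?_⟩
  simpa using sum_le_card_nsmul univ _ _ fun k _ => norm_le_of_forall_norm_expSum_le ℓ a hℓ
    (fun t ht => ht₀ ht) k

theorem expSum_eq_sum_coeff_mul {Q : ℂ[X]} {δ : ℝ} (hQ : ∀ k, Q.eval (exp (I * ℓ k * δ)) = 1)
    (t : ℝ) : expSum ℓ a t = Q.sum fun ν c => c * expSum ℓ a (t + ν * δ) := by
  simp only [Polynomial.sum_def, expSum_add_nat_mul, mul_sum]
  rw [sum_comm]
  refine sum_congr rfl fun k _ => ?_
  have h1 := hQ k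
  rw [eval_eq_sum, Polynomial.sum_def] at h1
  calc a k * exp (I * ℓ k * t)
      = a k * exp (I * ℓ k * t) * ∑ ν ∈ Q.support, Q.coeff ν * exp (I * ℓ k * δ) ^ ν := by
        rw [h1, mul_one]
    _ = _ := by rw [mul_sum]; exact sum_congr rfl fun ν _ => by ring

theorem exists_mem_Ioc_norm_expSum_le {n : ℕ} (hι : Fintype.card ι = n + 1) (s δ : ℝ) (M : ℕ) :
    ∃ ν ∈ Ioc M (M + n + 1), ‖expSum ℓ a s‖ ≤
      (n + 1) * (2 ^ (n + 1) * (n + (M + n + 1)).choose n) * ‖expSum ℓ a (s + ν * δ)‖ := by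
  set z : ι → ℂˣ := fun k => Units.mk0 (exp (I * ℓ k * δ)) (exp_ne_zero _)
  have hz (k : ι) : ‖(z k : ℂ)‖ = 1 := by simp [z, norm_exp]
  have hQ0 : turanPoly z M ≠ 0 := by
    obtain ⟨k⟩ : Nonempty ι := Fintype.card_pos_iff.1 (by omega)
    intro h
    simpa [h] using eval_turanPoly z M k
  obtain ⟨ν, hν, hmax⟩ := Polynomial.exists_mem_support_norm_sum_smul_le hQ0
    (fun ν => expSum ℓ a (s + ν * δ))
  refine ⟨ν, by simpa [hι, add_assoc] using support_turanPoly_subset z M hν, ?_⟩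
  rw [expSum_eq_sum_coeff_mul ℓ a (fun k => eval_turanPoly z M k) s]
  exact hmax.trans (by gcongr; exact sum_norm_coeff_turanPoly_le M hz hι)

end ExpSum

theorem turan_constant_le_one {n M : ℕ} (hn : 1 ≤ n) {L : ℝ} (hL : 0 < L) (hL2π : L ≤ 2 * π)
    (hM : M * L ≤ 2 * π * (n + 1)) :
    (L / 2000) ^ n * ((n + 1) ^ 2 * 2 ^ (n + 1) * ((n + (M + n + 1)).choose n : ℝ)) ≤ 1 := by
  have hn' : (1 : ℝ) ≤ n := by exact_mod_cast hn
  have hsq : ((n : ℝ) + 1) ^ 2 ≤ 4 ^ n := by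
    have : n + 1 ≤ 2 ^ n := Nat.lt_two_pow_self
    rw [show (4 : ℝ) = 2 ^ 2 by norm_num, ← pow_mul, mul_comm, pow_mul]
    gcongr
    exact_mod_cast this
  have htwo : (2 : ℝ) ^ (n + 1) ≤ 4 ^ n := by
    rw [show (4 : ℝ) = 2 * 2 by norm_num, mul_pow, pow_succ]
    gcongr
    exact le_self_pow₀ (by norm_num) (by omega)
  have hN : ((n + (M + n + 1) : ℕ) : ℝ) ≤ 12 * π * n / L := by
    rw [le_div_iff₀ hL]
    push_cast
    nlinarith [pi_pos]
  have hchoose : ((n + (M + n + 1)).choose n : ℝ) ≤ (12 * π * exp 1 / L) ^ n := by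
    refine (Nat.choose_le_exp_one_mul_div_pow _ _).trans (pow_le_pow_left₀ (by positivity) ?_ n)
    calc exp 1 * ((n + (M + n + 1) : ℕ) : ℝ) / n ≤ exp 1 * (12 * π * n / L) / n := by gcongr
      _ = 12 * π * exp 1 / L := by field_simp
  calc (L / 2000) ^ n * ((n + 1) ^ 2 * 2 ^ (n + 1) * ((n + (M + n + 1)).choose n : ℝ))
      ≤ (L / 2000) ^ n * (4 ^ n * 4 ^ n * (12 * π * exp 1 / L) ^ n) := by gcongr
    _ = (192 * π * exp 1 / 2000) ^ n := by
      rw [← mul_pow, ← mul_pow, ← mul_pow]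
      congr 1
      field_simp
      ring
    _ ≤ 1 := pow_le_one₀ (by positivity) (by nlinarith [pi_lt_d2, exp_one_lt_d9, exp_pos 1])

theorem exists_mem_Icc_pow_mul_sum_norm_le_norm_expSum {ι : Type*} [Fintype ι] {n : ℕ}
    (hn : 1 ≤ n) (hι : Fintype.card ι = n + 1) {ℓ : ι → ℤ} (hℓ : Function.Injective ℓ)
    (a : ι → ℂ) {α β : ℝ} (hαβ : α < β) (hβα : β - α ≤ 2 * π) :
    ∃ t ∈ Set.Icc α β, ((β - α) / 2000) ^ n * ∑ k, ‖a k‖ ≤ ‖expSum ℓ a t‖ := by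
  set L := β - α
  have hL : 0 < L := sub_pos.2 hαβ
  set δ := L / (n + 1)
  have hδ : 0 < δ := by positivity
  have hnδ : (n + 1) * δ = L := mul_div_cancel₀ L (by positivity)
  obtain ⟨t₀, ht₀⟩ := exists_sum_norm_le_card_mul_norm_expSum ℓ a hℓ
  -- `s ≡ t₀ (mod 2π)` lies in `(α - 2π, α]`, and the nodes `s + ν δ`, `M < ν ≤ M + n + 1`,
  -- all lie in `[α, β]`.
  set s := toIocMod two_pi_pos (α - 2 * π) t₀
  have hs : expSum ℓ a s = expSum ℓ a t₀ := by
    have := self_sub_toIocMod_eq_mul two_pi_pos (α - 2 * π) t₀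
    rw [eq_add_of_sub_eq' this, expSum_add_int_mul_two_pi]
  obtain ⟨hsα₁, hsα₂⟩ := toIocMod_mem_Ioc two_pi_pos (α - 2 * π) t₀
  set M := ⌊(α - s) / δ⌋₊
  have hM₁ : M * δ ≤ α - s := (le_div_iff₀ hδ).1 (Nat.floor_le (div_nonneg (by linarith) hδ.le))
  have hM₂ : α - s < (M + 1) * δ := (div_lt_iff₀ hδ).1 (Nat.lt_floor_add_one _)
  obtain ⟨ν, hν, hsample⟩ := exists_mem_Ioc_norm_expSum_le ℓ a hι s δ M
  have hν₁ : (M : ℝ) + 1 ≤ ν := by exact_mod_cast (mem_Ioc.1 hν).1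
  have hν₂ : (ν : ℝ) ≤ M + (n + 1) := by exact_mod_cast (mem_Ioc.1 hν).2
  refine ⟨s + ν * δ, ⟨by nlinarith, by nlinarith⟩, ?_⟩
  have hML : M * L ≤ 2 * π * (n + 1) := by rw [← hnδ]; nlinarith
  rw [hι, Nat.cast_add, Nat.cast_one, ← hs] at ht₀
  calc (L / 2000) ^ n * ∑ k, ‖a k‖
      ≤ (L / 2000) ^ n * ((n + 1) * ((n + 1) * (2 ^ (n + 1) * (n + (M + n + 1)).choose n) *
          ‖expSum ℓ a (s + ν * δ)‖)) := by
        gcongr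
        exact ht₀.trans (mul_le_mul_of_nonneg_left hsample (by positivity))
    _ = (L / 2000) ^ n * ((n + 1) ^ 2 * 2 ^ (n + 1) * (n + (M + n + 1)).choose n) *
          ‖expSum ℓ a (s + ν * δ)‖ := by ring
    _ ≤ ‖expSum ℓ a (s + ν * δ)‖ :=
        mul_le_of_le_one_left (norm_nonneg _) (turan_constant_le_one hn hL hβα hML)

/-- **Turán's lemma.** There is an absolute constant `b > 0` such that for every `m ≥ 1`,
pairwise distinct integers `ℓ_1,…,ℓ_m`, complex numbers `a_1,…,a_m`, and every interval
`I = [α,β]` of length `0 < β − α ≤ 2π`, the exponential sum `p(t) = ∑_k a_k e^{iℓ_k t}`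
satisfies `max_{t∈I} |p(t)| ≥ (b|I|)^{m−1} ∑_k |a_k|`. -/
theorem turan_lemma :
    ∃ b : ℝ, 0 < b ∧
      ∀ (m : ℕ), 1 ≤ m →
      ∀ (ℓ : Fin m → ℤ), Function.Injective ℓ →
      ∀ (a : Fin m → ℂ),
      ∀ (α β : ℝ), α < β → β - α ≤ 2 * π →
        ∃ t ∈ Set.Icc α β,
          (b * (β - α)) ^ (m - 1) * ∑ k : Fin m, ‖a k‖ ≤
            ‖∑ k : Fin m, a k * Complex.exp (Complex.I * (ℓ k : ℂ) * (t : ℂ))‖ := by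
  refine ⟨1 / 2000, by norm_num, fun m hm ℓ hℓ a α β hαβ hβα => ?_⟩
  obtain ⟨n, rfl⟩ : ∃ n, m = n + 1 := ⟨m - 1, by omega⟩
  rw [Nat.add_sub_cancel, one_div_mul_eq_div]
  rcases n.eq_zero_or_pos with rfl | hn
  · refine ⟨α, ⟨le_rfl, hαβ.le⟩, ?_⟩
    rw [pow_zero, one_mul]
    exact (norm_expSum_of_unique (ι := Fin 1) ℓ a α).ge
  · exact exists_mem_Icc_pow_mul_sum_norm_le_norm_expSum hn (Fintype.card_fin _) hℓ a hαβ hβα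
end

section
/- Let P(z) = Σ_{k=0}^n λ_k z^k be a polynomial with complex coefficients and let P̄(z) = (1−z)P(z), with coefficients λ̄_0,…,λ̄_{n+1}. Then for every r ∈ (0,∞), S(r,P̄) ≥ (1+r)/(2(n+1)) · S(r,P), where S(r,P) = Σ_{k=0}^n |λ_k| r^k and S(r,P̄) = Σ_{k=0}^{n+1} |λ̄_k| r^k. -/
/-!
Write `c i` for the coefficients of `(1 - X) * P`. They telescope: `∑_{i ≤ j} c i = a_j` and
`∑_{j < i ≤ n+1} c i = -a_j`, where `a_j` are the coefficients of `P`. For `r ≤ 1` the head sums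
give `|a_j| r^j ≤ S(r, (1 - X) P)`, and for `r ≥ 1` the tail sums give `|a_j| r^(j+1) ≤ S(r, (1 - X) P)`.
Either way `(1 + r)/2 · |a_j| r^j ≤ max 1 r · |a_j| r^j ≤ S(r, (1 - X) P)`; summing over the `n + 1`
indices `j` gives the claim.
-/

noncomputable def polyOf {n : ℕ} (lam : Fin (n + 1) → ℂ) : Polynomial ℂ :=
  ∑ k : Fin (n + 1), Polynomial.C (lam k) * Polynomial.X ^ (k : ℕ)

open Finset

namespace Polynomial

section Ring

variable {R : Type*} [Ring R]

lemma coeff_one_sub_X_mul_succ (p : R[X]) (i : ℕ) :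
    ((1 - X) * p).coeff (i + 1) = p.coeff (i + 1) - p.coeff i := by
  simp [sub_mul, coeff_X_mul]

lemma sum_range_coeff_one_sub_X_mul (p : R[X]) (j : ℕ) :
    ∑ i ∈ range (j + 1), ((1 - X) * p).coeff i = p.coeff j := by
  induction j with
  | zero => simp [sub_mul]
  | succ j ih => rw [sum_range_succ, ih, coeff_one_sub_X_mul_succ]; abel

lemma sum_Ico_coeff_one_sub_X_mul (p : R[X]) {j m : ℕ} (hjm : j ≤ m) :
    ∑ i ∈ Ico (j + 1) (m + 1), ((1 - X) * p).coeff i = p.coeff m - p.coeff j := by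
  rw [sum_Ico_eq_sub _ (by omega), sum_range_coeff_one_sub_X_mul,
    sum_range_coeff_one_sub_X_mul]

end Ring

section Norm

variable {R : Type*} [SeminormedRing R] {p : R[X]} {r : ℝ}

lemma norm_coeff_mul_pow_le_of_le_one (hr₀ : 0 ≤ r) (hr₁ : r ≤ 1) {j N : ℕ} (hjN : j < N) :
    ‖p.coeff j‖ * r ^ j ≤ ∑ i ∈ range N, ‖((1 - X) * p).coeff i‖ * r ^ i :=
  calc ‖p.coeff j‖ * r ^ j
      ≤ ∑ i ∈ range (j + 1), ‖((1 - X) * p).coeff i‖ * r ^ j := by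
        rw [← sum_mul, ← sum_range_coeff_one_sub_X_mul p j]
        gcongr
        exact norm_sum_le _ _
    _ ≤ ∑ i ∈ range (j + 1), ‖((1 - X) * p).coeff i‖ * r ^ i := by
        refine sum_le_sum fun i hi => ?_
        exact mul_le_mul_of_nonneg_left (pow_le_pow_of_le_one hr₀ hr₁ (mem_range_succ_iff.mp hi))
          (norm_nonneg _)
    _ ≤ ∑ i ∈ range N, ‖((1 - X) * p).coeff i‖ * r ^ i :=
        sum_le_sum_of_subset_of_nonneg (range_subset_range.mpr hjN) fun _ _ _ => by positivity

lemma norm_coeff_mul_pow_succ_le_of_one_le (hr : 1 ≤ r) {j m : ℕ} (hp : p.natDegree < m)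
    (hjm : j < m) :
    ‖p.coeff j‖ * r ^ (j + 1) ≤ ∑ i ∈ range (m + 1), ‖((1 - X) * p).coeff i‖ * r ^ i :=
  calc ‖p.coeff j‖ * r ^ (j + 1)
      ≤ ∑ i ∈ Ico (j + 1) (m + 1), ‖((1 - X) * p).coeff i‖ * r ^ (j + 1) := by
        rw [← sum_mul, ← norm_neg, ← zero_sub, ← coeff_eq_zero_of_natDegree_lt hp,
          ← sum_Ico_coeff_one_sub_X_mul p hjm.le]
        gcongr
        exact norm_sum_le _ _
    _ ≤ ∑ i ∈ Ico (j + 1) (m + 1), ‖((1 - X) * p).coeff i‖ * r ^ i := by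
        gcongr with i hi
        exact (mem_Ico.mp hi).1
    _ ≤ ∑ i ∈ range (m + 1), ‖((1 - X) * p).coeff i‖ * r ^ i := by
        rw [range_eq_Ico]
        exact sum_le_sum_of_subset_of_nonneg (Ico_subset_Ico (Nat.zero_le _) le_rfl)
          fun _ _ _ => by positivity

lemma one_add_div_two_mul_norm_coeff_mul_pow_le (hr : 0 ≤ r) {j m : ℕ} (hp : p.natDegree < m)
    (hjm : j < m) :
    (1 + r) / 2 * (‖p.coeff j‖ * r ^ j) ≤
      ∑ i ∈ range (m + 1), ‖((1 - X) * p).coeff i‖ * r ^ i := by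
  rcases le_total r 1 with hr₁ | hr₁
  · calc (1 + r) / 2 * (‖p.coeff j‖ * r ^ j) ≤ 1 * (‖p.coeff j‖ * r ^ j) := by
          gcongr; linarith
      _ ≤ _ := by rw [one_mul]; exact norm_coeff_mul_pow_le_of_le_one hr hr₁ (by omega)
  · calc (1 + r) / 2 * (‖p.coeff j‖ * r ^ j) ≤ r * (‖p.coeff j‖ * r ^ j) := by
          gcongr; linarith
      _ = ‖p.coeff j‖ * r ^ (j + 1) := by ring
      _ ≤ _ := norm_coeff_mul_pow_succ_le_of_one_le hr₁ hp hjm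

theorem one_add_div_two_mul_sum_norm_coeff_mul_pow_le (hr : 0 ≤ r) {m : ℕ}
    (hp : p.natDegree < m) :
    (1 + r) / 2 * ∑ j ∈ range m, ‖p.coeff j‖ * r ^ j ≤
      m * ∑ i ∈ range (m + 1), ‖((1 - X) * p).coeff i‖ * r ^ i := by
  rw [mul_sum]
  simpa using sum_le_card_nsmul (range m) _ _ fun j hj =>
    one_add_div_two_mul_norm_coeff_mul_pow_le hr hp (mem_range.mp hj)

end Norm

end Polynomial

open Polynomial

lemma coeff_polyOf {n : ℕ} (lam : Fin (n + 1) → ℂ) (k : Fin (n + 1)) :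
    (polyOf lam).coeff k = lam k := by
  simp [polyOf, Fin.val_inj]

lemma natDegree_polyOf_lt {n : ℕ} (lam : Fin (n + 1) → ℂ) : (polyOf lam).natDegree < n + 1 :=
  Nat.lt_succ_of_le <| natDegree_sum_le_of_forall_le _ _ fun k _ =>
    (natDegree_C_mul_X_pow_le _ _).trans (Nat.lt_succ_iff.mp k.isLt)

/-- **Claim.** For `P(z) = ∑_{k=0}^n λ_k z^k` and `P̄(z) = (1−z)P(z)` with coefficients
`λ̄_0,…,λ̄_{n+1}`, one has `S(r,P̄) ≥ (1+r)/(2(n+1)) · S(r,P)` for every `r ∈ (0,∞)`,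
where `S(r,Q) = ∑_k |μ_k| r^k`. -/
theorem S_of_one_sub_z_mul (n : ℕ) (lam : Fin (n + 1) → ℂ) (r : ℝ) (hr : 0 < r) :
    (1 + r) / (2 * (n + 1)) * (∑ k : Fin (n + 1), ‖lam k‖ * r ^ (k : ℕ)) ≤
      ∑ k ∈ Finset.range (n + 2),
        ‖((1 - Polynomial.X) * polyOf lam).coeff k‖ * r ^ k := by
  have key := one_add_div_two_mul_sum_norm_coeff_mul_pow_le hr.le (natDegree_polyOf_lt lam)
  simp_rw [← coeff_polyOf lam]
  rw [Fin.sum_univ_eq_sum_range (fun k => ‖(polyOf lam).coeff k‖ * r ^ k),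
    div_mul_eq_mul_div, div_le_iff₀ (by positivity)]
  push_cast at key
  linarith
end

section
/- There exists an absolute constant b > 0 such that the following holds. Let n ≥ 2 and m ≥ 1 be integers, r > 0, δ > 0, δ₁ > 0, and let I ⊂ ℝ be an interval of length 0 < |I| ≤ 2π. Let (λ_k^+)_{k=0}^n, (λ_k^-)_{k=0}^n be complex numbers and a ∈ ℂ with |λ_k^+ − λ_k^-| ≥ ½(|λ_k^+ − a| + |λ_k^- − a|) for every k. Let σ ∈ {+,−}^{n+1}, let U₁, U₂ ⊂ {0,…,n} be two distinct m-element subsets, and for j = 1,2 let σ^j be the sign sequence obtained from σ by flipping the signs σ_k for k ∈ U_j, and put P_j(z) = Σ_{k=0}^n λ_k^{σ^j_k} z^k. Suppose that for j = 1,2: S(r,P_j) > 0, |λ_k^{σ^j_k} − a| r^k ≥ δ S(r,P_j) for every k ∈ U_j, and max_{θ∈I} |P_j(r e^{iθ})| ≤ δ₁ S(r,P_j). Then δ₁ > ¼ δ (b|I|)^{2m−1}. -/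
/-!
Subtracting the two polynomials cancels every coefficient outside `U₁ ∆ U₂`, so `Q = P₁ - P₂`
has at most `2m` terms, is at most `2 δ₁ S(r,P₁)` on the arc (when `S(r,P₂) ≤ S(r,P₁)`), and its
coefficient at some `k₀ ∈ U₁ \ U₂` is `±(λ_{k₀}^+ - λ_{k₀}^-)`, of size at least `δ S(r,P₁) / 2`.

A Turán-type argument bounds such a coefficient: replacing `Q(z)` by `Q(e^{is} z) - e^{ijs} Q(z)`
kills the `j`-th term, doubles the sup bound and shortens the arc by `s`, and multiplies the
`k₀`-th coefficient by `e^{ik₀s} - e^{ijs}`. Killing the other `N ≤ 2m - 1` terms with shifts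
`s_j = min(|I|/N, π/|j - k₀|)` leaves a monomial. At most two indices lie at each distance from
`k₀`, so the product of the factors is at least `(2/π)^N N! (|I|/2N)^N ≥ (|I|/(πe))^N`.
-/

open Real

/-- The sign sequence obtained from `σ` by flipping the signs at the indices in `U`. -/
def flipped {n : ℕ} (σ : Fin (n + 1) → Bool) (U : Finset (Fin (n + 1))) :
    Fin (n + 1) → Bool :=
  fun k => if k ∈ U then !σ k else σ k

/-- The coefficient vector chosen according to the sign sequence `τ`. -/
def coefOf {n : ℕ} (lamP lamM : Fin (n + 1) → ℂ) (τ : Fin (n + 1) → Bool) :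
    Fin (n + 1) → ℂ :=
  fun k => if τ k then lamP k else lamM k

/-- `S(r,P) = ∑_k |λ_k| r^k`. -/
noncomputable def Sof {n : ℕ} (lam : Fin (n + 1) → ℂ) (r : ℝ) : ℝ :=
  ∑ k : Fin (n + 1), ‖lam k‖ * r ^ (k : ℕ)

/-- The value `P(z) = ∑_k λ_k z^k`. -/
noncomputable def Pval {n : ℕ} (lam : Fin (n + 1) → ℂ) (z : ℂ) : ℂ :=
  ∑ k : Fin (n + 1), lam k * z ^ (k : ℕ)

open Finset

theorem div_exp_one_pow_le_factorial (N : ℕ) : ((N : ℝ) / Real.exp 1) ^ N ≤ N.factorial := by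
  have h := Real.pow_div_factorial_le_exp _ (Nat.cast_nonneg N) N
  rw [← Real.exp_one_pow, div_le_iff₀ (by positivity)] at h
  rw [div_pow, div_le_iff₀ (by positivity)]
  linarith

theorem prod_range_add_one_le_prod {g : ℕ → ℝ} (hg : Monotone g) (hg₀ : ∀ j, 0 ≤ g j)
    (B : Finset ℕ) (hB : ∀ j ∈ B, 1 ≤ j) : ∏ i ∈ range #B, g (i + 1) ≤ ∏ j ∈ B, g j := by
  induction B using Finset.induction_on_max with
  | empty => simp
  | insert a B hlt ih =>
    have haB : a ∉ B := fun h => lt_irrefl a (hlt a h)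
    have hcard : #B + 1 ≤ a := by
      have hsub : B ⊆ Ico 1 a := fun j hj =>
        mem_Ico.2 ⟨hB j (mem_insert_of_mem hj), hlt j hj⟩
      have := card_le_card hsub
      have := hB a (mem_insert_self a B)
      simp only [Nat.card_Ico] at *
      omega
    rw [card_insert_of_notMem haB, prod_range_succ, prod_insert haB, mul_comm (g a)]
    exact mul_le_mul (ih fun j hj => hB j (mem_insert_of_mem hj)) (hg hcard) (hg₀ _)
      (prod_nonneg fun j _ => hg₀ j)

theorem prod_range_add_one_le_prod_of_injOn {ι : Type*} {g : ℕ → ℝ} (hg : Monotone g)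
    (hg₀ : ∀ j, 0 ≤ g j) (T : Finset ι) {f : ι → ℕ} (hf : Set.InjOn f T)
    (hf₁ : ∀ k ∈ T, 1 ≤ f k) : ∏ i ∈ range #T, g (i + 1) ≤ ∏ k ∈ T, g (f k) := by
  classical
  rw [← card_image_of_injOn hf, ← prod_image hf]
  exact prod_range_add_one_le_prod hg hg₀ _ (by simpa using hf₁)

theorem two_div_pi_mul_le_norm_exp_I_mul_sub_one {x : ℝ} (hx₀ : 0 ≤ x) (hxπ : x ≤ π) :
    2 / π * x ≤ ‖Complex.exp (Complex.I * x) - 1‖ := by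
  rw [Complex.norm_exp_I_mul_ofReal_sub_one, norm_mul, Real.norm_eq_abs,
    Real.norm_eq_abs, abs_two]
  have := Real.mul_le_sin (x := x / 2) (by positivity) (by linarith)
  have := le_abs_self (Real.sin (x / 2))
  have : 2 / π * x = 2 * (2 / π * (x / 2)) := by ring
  linarith

theorem norm_pow_sub_pow_eq_norm_pow_dist_sub_one {w : ℂ} (hw : ‖w‖ = 1) (a b : ℕ) :
    ‖w ^ a - w ^ b‖ = ‖w ^ Nat.dist a b - 1‖ := by
  wlog hab : b ≤ a generalizing a b
  · rw [norm_sub_rev, Nat.dist_comm]; exact this b a (by omega)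
  rw [Nat.dist_eq_sub_of_le_right hab, ← Nat.sub_add_cancel hab, pow_add,
    Nat.add_sub_cancel, ← sub_one_mul, norm_mul, norm_pow, hw, one_pow, mul_one]

theorem two_div_pi_mul_min_le_norm_pow_sub_pow {a b : ℕ} (hab : a ≠ b) {y : ℝ} (hy : 0 ≤ y) :
    2 / π * min (Nat.dist a b * y) π ≤
      ‖Complex.exp (Complex.I * ↑(min y (π / Nat.dist a b))) ^ a -
        Complex.exp (Complex.I * ↑(min y (π / Nat.dist a b))) ^ b‖ := by
  have hd : (0 : ℝ) < Nat.dist a b := Nat.cast_pos.2 (Nat.dist_pos_of_ne hab)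
  have hmin : (Nat.dist a b : ℝ) * min y (π / Nat.dist a b) = min (Nat.dist a b * y) π := by
    rw [mul_min_of_nonneg _ _ hd.le, mul_div_cancel₀ _ hd.ne']
  have hw : ‖Complex.exp (Complex.I * ↑(min y (π / Nat.dist a b)))‖ = 1 := by
    rw [mul_comm]; exact Complex.norm_exp_ofReal_mul_I _
  rw [norm_pow_sub_pow_eq_norm_pow_dist_sub_one hw, ← Complex.exp_nat_mul, ← mul_assoc,
    mul_comm _ Complex.I, mul_assoc, ← hmin]
  exact_mod_cast two_div_pi_mul_le_norm_exp_I_mul_sub_one (by positivity) (hmin ▸ min_le_right _ _)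

theorem pow_le_prod_range_min {L : ℝ} (hL₀ : 0 ≤ L) (hL : L ≤ 2 * π) (N : ℕ) :
    (L / (2 * Real.exp 1)) ^ N ≤ ∏ i ∈ range N, min ((i + 1 : ℕ) * (L / (2 * N))) π := by
  rcases N.eq_zero_or_pos with rfl | hN
  · simp
  have hsmall : ∀ i ∈ range N, ((i + 1 : ℕ) : ℝ) * (L / (2 * N)) ≤ π := fun i hi => by
    have : ((i + 1 : ℕ) : ℝ) ≤ N := by exact_mod_cast mem_range.1 hi
    calc ((i + 1 : ℕ) : ℝ) * (L / (2 * N)) ≤ N * (L / (2 * N)) := by gcongr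
      _ = L / 2 := by field_simp
      _ ≤ π := by linarith
  rw [prod_congr rfl fun i hi => min_eq_left (hsmall i hi), prod_mul_distrib, prod_const,
    card_range, ← Nat.cast_prod, prod_range_add_one_eq_factorial]
  calc (L / (2 * Real.exp 1)) ^ N = ((N : ℝ) / Real.exp 1) ^ N * (L / (2 * N)) ^ N := by
        rw [← mul_pow]; congr 1; field_simp
    _ ≤ N.factorial * (L / (2 * N)) ^ N := by
        gcongr; exact div_exp_one_pow_le_factorial N

theorem exists_shifts_pow_le_prod_norm_pow_sub_pow {k₀ : ℕ} {T : Finset ℕ} (hk₀ : k₀ ∉ T)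
    {L : ℝ} (hL₀ : 0 ≤ L) (hL : L ≤ 2 * π) :
    ∃ s : ℕ → ℝ, (∀ k ∈ T, 0 ≤ s k) ∧ ∑ k ∈ T, s k ≤ L ∧
      (L / (π * Real.exp 1)) ^ #T ≤
        ∏ k ∈ T, ‖Complex.exp (Complex.I * s k) ^ k₀ - Complex.exp (Complex.I * s k) ^ k‖ := by
  set N := #T
  refine ⟨fun k => min (L / N) (π / Nat.dist k₀ k), fun k _ => by positivity, ?_, ?_⟩
  · calc ∑ k ∈ T, min (L / N) (π / Nat.dist k₀ k) ≤ ∑ _k ∈ T, L / N :=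
          sum_le_sum fun k _ => min_le_left _ _
      _ ≤ L := by
          rw [sum_const, nsmul_eq_mul]
          rcases N.eq_zero_or_pos with hN | hN
          · simp [N, hN, hL₀]
          · rw [mul_div_cancel₀ _ (by positivity)]
  -- Distances to `k₀` from above and from below are encoded by even and odd numbers.
  set e : ℕ → ℕ := fun k => 2 * Nat.dist k₀ k - if k < k₀ then 1 else 0
  have hne : ∀ k ∈ T, k₀ ≠ k := fun k hk h => hk₀ (h ▸ hk)
  have he_inj : Set.InjOn e T := fun k hk k' hk' h => by
    have := hne k hk; have := hne k' hk'
    simp only [e, Nat.dist] at h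
    split_ifs at h <;> omega
  have he₁ : ∀ k ∈ T, 1 ≤ e k := fun k hk => by
    have := hne k hk
    simp only [e, Nat.dist]
    split_ifs <;> omega
  set g : ℕ → ℝ := fun j => min (j * (L / (2 * N))) π
  have hg : Monotone g := fun i j hij => min_le_min_right _ (by gcongr)
  have hfactor : ∀ k ∈ T, 2 / π * g (e k) ≤
      ‖Complex.exp (Complex.I * ↑(min (L / N) (π / Nat.dist k₀ k))) ^ k₀ -
        Complex.exp (Complex.I * ↑(min (L / N) (π / Nat.dist k₀ k))) ^ k‖ := fun k hk => by
    refine le_trans ?_ (two_div_pi_mul_min_le_norm_pow_sub_pow (hne k hk) (by positivity))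
    have : (e k : ℝ) * (L / (2 * N)) ≤ Nat.dist k₀ k * (L / N) := by
      have : (e k : ℝ) ≤ 2 * Nat.dist k₀ k := by exact_mod_cast Nat.sub_le _ _
      calc (e k : ℝ) * (L / (2 * N)) ≤ 2 * Nat.dist k₀ k * (L / (2 * N)) := by gcongr
        _ = Nat.dist k₀ k * (L / N) := by field_simp
    exact mul_le_mul_of_nonneg_left (min_le_min_right π this) (by positivity)
  calc (L / (π * Real.exp 1)) ^ N = (2 / π) ^ N * (L / (2 * Real.exp 1)) ^ N := by
        rw [← mul_pow]; congr 1; field_simp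
    _ ≤ (2 / π) ^ N * ∏ i ∈ range N, g (i + 1) := by
        gcongr; exact pow_le_prod_range_min hL₀ hL N
    _ ≤ (2 / π) ^ N * ∏ k ∈ T, g (e k) := by
        gcongr
        exact prod_range_add_one_le_prod_of_injOn hg (fun j => by positivity) T he_inj he₁
    _ = ∏ k ∈ T, 2 / π * g (e k) := by rw [prod_mul_distrib, prod_const]
    _ ≤ _ := prod_le_prod (fun k _ => by positivity) hfactor

theorem Pval_sub {n : ℕ} (c d : Fin (n + 1) → ℂ) (z : ℂ) :
    Pval (c - d) z = Pval c z - Pval d z := by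
  simp only [Pval, Pi.sub_apply, sub_mul, sum_sub_distrib]

theorem Pval_mul {n : ℕ} (c : Fin (n + 1) → ℂ) (w z : ℂ) :
    Pval c (w * z) = Pval (fun k => c k * w ^ (k : ℕ)) z := by
  simp only [Pval, mul_pow, mul_assoc, mul_comm (w ^ _)]

theorem Pval_mul_pow_sub_pow {n : ℕ} (c : Fin (n + 1) → ℂ) (j : ℕ) (w z : ℂ) :
    Pval (fun k => c k * (w ^ (k : ℕ) - w ^ j)) z = Pval c (w * z) - w ^ j * Pval c z := by
  simp only [Pval, mul_sum, ← sum_sub_distrib]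
  exact sum_congr rfl fun k _ => by ring

theorem norm_Pval_exp_mul_sub_le {n : ℕ} {c : Fin (n + 1) → ℂ} {α β M : ℝ}
    (hM : ∀ θ ∈ Set.Icc α β, ‖Pval c (Complex.exp (Complex.I * θ))‖ ≤ M) (j : ℕ) {s : ℝ}
    (hs : 0 ≤ s) :
    ∀ θ ∈ Set.Icc α (β - s), ‖Pval (fun k => c k * (Complex.exp (Complex.I * s) ^ (k : ℕ) -
      Complex.exp (Complex.I * s) ^ j)) (Complex.exp (Complex.I * θ))‖ ≤ 2 * M := by
  rintro θ ⟨hαθ, hθβ⟩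
  have hw : ‖Complex.exp (Complex.I * s)‖ = 1 := by
    rw [mul_comm]; exact Complex.norm_exp_ofReal_mul_I s
  rw [Pval_mul_pow_sub_pow, ← Complex.exp_add, ← mul_add, ← Complex.ofReal_add]
  calc _ ≤ _ + _ := norm_sub_le _ _
    _ ≤ M + M := by
        rw [norm_mul, norm_pow, hw, one_pow, one_mul]
        exact add_le_add (hM _ ⟨by linarith, by linarith⟩) (hM _ ⟨hαθ, by linarith⟩)
    _ = 2 * M := by ring

theorem norm_mul_prod_le_of_forall_norm_Pval_le {n : ℕ} {k₀ : Fin (n + 1)}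
    {T : Finset (Fin (n + 1))} (hk₀ : k₀ ∉ T) {s : Fin (n + 1) → ℝ} (hs : ∀ k ∈ T, 0 ≤ s k)
    {c : Fin (n + 1) → ℂ} (hc : ∀ k ∉ insert k₀ T, c k = 0) {α β M : ℝ}
    (hsum : ∑ k ∈ T, s k ≤ β - α)
    (hM : ∀ θ ∈ Set.Icc α β, ‖Pval c (Complex.exp (Complex.I * θ))‖ ≤ M) :
    ‖c k₀‖ * ∏ k ∈ T, ‖Complex.exp (Complex.I * s k) ^ (k₀ : ℕ) -
      Complex.exp (Complex.I * s k) ^ (k : ℕ)‖ ≤ 2 ^ #T * M := by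
  induction T using Finset.induction_on generalizing c β M with
  | empty =>
    have hPval : Pval c (Complex.exp (Complex.I * α)) =
        c k₀ * Complex.exp (Complex.I * α) ^ (k₀ : ℕ) :=
      sum_eq_single k₀ (fun k _ hk => by rw [hc k (by simpa using hk), zero_mul]) (by simp)
    rw [prod_empty, card_empty, pow_zero, mul_one, one_mul]
    have := hM α ⟨le_rfl, by simpa using hsum⟩
    rwa [hPval, norm_mul, norm_pow, mul_comm Complex.I, Complex.norm_exp_ofReal_mul_I, one_pow,
      mul_one] at this
  | insert j T hjT ih =>
    set w := Complex.exp (Complex.I * s j)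
    have hc' : ∀ k ∉ insert k₀ T, c k * (w ^ (k : ℕ) - w ^ (j : ℕ)) = 0 := fun k hk => by
      by_cases hkj : k = j
      · rw [hkj, sub_self, mul_zero]
      · rw [hc k (by simp_all), zero_mul]
    have := ih (fun h => hk₀ (mem_insert_of_mem h)) (fun k hk => hs k (mem_insert_of_mem hk))
      hc' (β := β - s j) (by rw [sum_insert hjT] at hsum; linarith)
      (norm_Pval_exp_mul_sub_le hM j (hs j (mem_insert_self j T)))
    rw [prod_insert hjT, card_insert_of_notMem hjT, pow_succ]
    rw [norm_mul] at this
    linarith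

theorem norm_mul_pow_le_of_forall_norm_Pval_le {n : ℕ} {k₀ : Fin (n + 1)}
    {T : Finset (Fin (n + 1))} (hk₀ : k₀ ∉ T) {c : Fin (n + 1) → ℂ}
    (hc : ∀ k ∉ insert k₀ T, c k = 0) {α β M : ℝ} (hαβ : α ≤ β) (hβα : β - α ≤ 2 * π)
    (hM : ∀ θ ∈ Set.Icc α β, ‖Pval c (Complex.exp (Complex.I * θ))‖ ≤ M) :
    ‖c k₀‖ * ((β - α) / (2 * π * Real.exp 1)) ^ #T ≤ M := by
  obtain ⟨s, hs, hsum, hprod⟩ := exists_shifts_pow_le_prod_norm_pow_sub_pow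
    (k₀ := k₀) (T := T.map Fin.valEmbedding) (by simpa [Fin.val_inj] using hk₀)
    (sub_nonneg.2 hαβ) hβα
  rw [sum_map] at hsum
  rw [prod_map, card_map] at hprod
  have := norm_mul_prod_le_of_forall_norm_Pval_le hk₀ (fun k hk => hs _ (mem_map_of_mem _ hk))
    hc hsum hM
  have h2 : (0 : ℝ) < 2 ^ #T := by positivity
  calc ‖c k₀‖ * ((β - α) / (2 * π * Real.exp 1)) ^ #T
      = ‖c k₀‖ * ((β - α) / (π * Real.exp 1)) ^ #T / 2 ^ #T := by
        rw [mul_div_assoc, ← div_pow, div_div, mul_comm _ (2 : ℝ), mul_assoc]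
    _ ≤ M := by
        rw [div_le_iff₀' h2]
        exact (mul_le_mul_of_nonneg_left hprod (norm_nonneg _)).trans this

open scoped symmDiff

section Flips

variable {n : ℕ} (lamP lamM : Fin (n + 1) → ℂ) (σ : Fin (n + 1) → Bool)

theorem coefOf_flipped_eq_of_notMem_symmDiff {U₁ U₂ : Finset (Fin (n + 1))} {k : Fin (n + 1)}
    (hk : k ∉ U₁ ∆ U₂) :
    coefOf lamP lamM (flipped σ U₁) k = coefOf lamP lamM (flipped σ U₂) k := by
  rw [mem_symmDiff] at hk
  by_cases h : k ∈ U₁ <;> simp_all [coefOf, flipped]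

theorem norm_coefOf_flipped_sub_of_mem_of_notMem {U₁ U₂ : Finset (Fin (n + 1))}
    {k : Fin (n + 1)} (h₁ : k ∈ U₁) (h₂ : k ∉ U₂) :
    ‖coefOf lamP lamM (flipped σ U₁) k - coefOf lamP lamM (flipped σ U₂) k‖ =
      ‖lamP k - lamM k‖ := by
  simp only [coefOf, flipped, h₁, h₂, if_true, if_false]
  cases σ k <;> simp [norm_sub_rev]

variable {lamP lamM} in
theorem norm_coefOf_sub_le {a : ℂ} {k : Fin (n + 1)}
    (h : 1 / 2 * (‖lamP k - a‖ + ‖lamM k - a‖) ≤ ‖lamP k - lamM k‖) (τ : Fin (n + 1) → Bool) :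
    ‖coefOf lamP lamM τ k - a‖ ≤ 2 * ‖lamP k - lamM k‖ := by
  unfold coefOf
  split <;> linarith [norm_nonneg (lamP k - a), norm_nonneg (lamM k - a)]

end Flips

theorem card_symmDiff_le_add {α : Type*} [DecidableEq α] (s t : Finset α) :
    #(s ∆ t) ≤ #s + #t := by
  rw [symmDiff_def]
  exact (card_union_le _ _).trans
    (add_le_add (card_le_card sdiff_subset) (card_le_card sdiff_subset))

theorem quarter_mul_pow_le_of_flips {n m : ℕ} {r δ δ₁ α β : ℝ} (hr : 0 ≤ r) (hδ : 0 ≤ δ)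
    (hδ₁ : 0 ≤ δ₁) (hαβ : α ≤ β) (hβα : β - α ≤ 2 * π) {lamP lamM : Fin (n + 1) → ℂ} {a : ℂ}
    (hlam : ∀ k, 1 / 2 * (‖lamP k - a‖ + ‖lamM k - a‖) ≤ ‖lamP k - lamM k‖)
    {σ : Fin (n + 1) → Bool} {U₁ U₂ : Finset (Fin (n + 1))} (hU₁ : #U₁ = m) (hU₂ : #U₂ = m)
    (hne : U₁ ≠ U₂) (hS₁ : 0 < Sof (coefOf lamP lamM (flipped σ U₁)) r)
    (hS₂₁ : Sof (coefOf lamP lamM (flipped σ U₂)) r ≤ Sof (coefOf lamP lamM (flipped σ U₁)) r)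
    (hδU₁ : ∀ k ∈ U₁, δ * Sof (coefOf lamP lamM (flipped σ U₁)) r ≤
      ‖coefOf lamP lamM (flipped σ U₁) k - a‖ * r ^ (k : ℕ))
    (hmax₁ : ∀ θ ∈ Set.Icc α β, ‖Pval (coefOf lamP lamM (flipped σ U₁))
      (r * Complex.exp (Complex.I * θ))‖ ≤ δ₁ * Sof (coefOf lamP lamM (flipped σ U₁)) r)
    (hmax₂ : ∀ θ ∈ Set.Icc α β, ‖Pval (coefOf lamP lamM (flipped σ U₂))
      (r * Complex.exp (Complex.I * θ))‖ ≤ δ₁ * Sof (coefOf lamP lamM (flipped σ U₂)) r) :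
    1 / 4 * δ * ((β - α) / (2 * π * Real.exp 1)) ^ (2 * m - 1) ≤ δ₁ := by
  classical
  set P₁ := coefOf lamP lamM (flipped σ U₁)
  set P₂ := coefOf lamP lamM (flipped σ U₂)
  set S₁ := Sof P₁ r
  set q := (β - α) / (2 * π * Real.exp 1)
  obtain ⟨k₀, hk₀₁, hk₀₂⟩ : ∃ k ∈ U₁, k ∉ U₂ :=
    not_subset.1 fun h => hne (eq_of_subset_of_card_le h (by omega))
  have hk₀ : k₀ ∈ U₁ ∆ U₂ := mem_symmDiff.2 (Or.inl ⟨hk₀₁, hk₀₂⟩)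
  set T := (U₁ ∆ U₂).erase k₀
  have hT : #T ≤ 2 * m - 1 := by
    have := card_symmDiff_le_add U₁ U₂
    rw [card_erase_of_mem hk₀]
    omega
  set c : Fin (n + 1) → ℂ := fun k => (P₁ - P₂) k * r ^ (k : ℕ)
  have hc : ∀ k ∉ insert k₀ T, c k = 0 := fun k hk => by
    rw [insert_erase hk₀] at hk
    have : P₁ k = P₂ k := coefOf_flipped_eq_of_notMem_symmDiff lamP lamM σ hk
    simp only [c, Pi.sub_apply, this, sub_self, zero_mul]
  have hM : ∀ θ ∈ Set.Icc α β, ‖Pval c (Complex.exp (Complex.I * θ))‖ ≤ 2 * (δ₁ * S₁) :=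
    fun θ hθ => by
      rw [← Pval_mul, Pval_sub]
      calc _ ≤ _ := norm_sub_le _ _
        _ ≤ δ₁ * S₁ + δ₁ * Sof P₂ r := add_le_add (hmax₁ θ hθ) (hmax₂ θ hθ)
        _ ≤ 2 * (δ₁ * S₁) := by nlinarith
  have hcore := norm_mul_pow_le_of_forall_norm_Pval_le (notMem_erase k₀ _) hc hαβ hβα hM
  have hck₀ : δ * S₁ ≤ 2 * ‖c k₀‖ := by
    rw [norm_mul, Pi.sub_apply, norm_coefOf_flipped_sub_of_mem_of_notMem lamP lamM σ hk₀₁ hk₀₂,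
      norm_pow, Complex.norm_real, Real.norm_of_nonneg hr, ← mul_assoc]
    exact (hδU₁ k₀ hk₀₁).trans
      (mul_le_mul_of_nonneg_right (norm_coefOf_sub_le (hlam k₀) _) (by positivity))
  have hq : q ≤ 1 := by
    rw [div_le_one (by positivity)]
    nlinarith [Real.one_le_exp zero_le_one, Real.pi_pos]
  calc 1 / 4 * δ * q ^ (2 * m - 1) ≤ 1 / 4 * δ * q ^ #T := by
        have hq₀ : 0 ≤ q := div_nonneg (sub_nonneg.2 hαβ) (by positivity)
        exact mul_le_mul_of_nonneg_left (pow_le_pow_of_le_one hq₀ hq hT) (by positivity)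
    _ ≤ δ₁ := by
        have : δ * S₁ * q ^ #T ≤ 4 * δ₁ * S₁ := by
          calc δ * S₁ * q ^ #T ≤ 2 * ‖c k₀‖ * q ^ #T := by gcongr
            _ ≤ 4 * δ₁ * S₁ := by linarith
        nlinarith

/-- **Claim (dangerous configurations).** There is an absolute constant `b > 0` such that:
given `n ≥ 2`, `m ≥ 1`, `r, δ, δ₁ > 0`, an interval `I = [α,β]` with `0 < β − α ≤ 2π`,
coefficients `(λ_k^±)` and `a` with `|λ_k^+ − λ_k^-| ≥ ½(|λ_k^+ − a| + |λ_k^- − a|)`, a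
sign sequence `σ` and two distinct `m`-element sets `U₁ ≠ U₂`, if for `j = 1,2` the flipped
polynomial `P_j` has `S(r,P_j) > 0`, all flipped coefficients are `δ`-large, and
`max_{θ∈I} |P_j(re^{iθ})| ≤ δ₁ S(r,P_j)`, then `δ₁ > ¼ δ (b|I|)^{2m−1}`. -/
theorem dangerous_flips_force_large_delta :
    ∃ b : ℝ, 0 < b ∧
      ∀ (n m : ℕ), 2 ≤ n → 1 ≤ m →
      ∀ (r δ δ₁ : ℝ), 0 < r → 0 < δ → 0 < δ₁ →
      ∀ (α β : ℝ), α < β → β - α ≤ 2 * π →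
      ∀ (lamP lamM : Fin (n + 1) → ℂ) (a : ℂ),
        (∀ k : Fin (n + 1),
          (1 / 2) * (‖lamP k - a‖ + ‖lamM k - a‖) ≤
            ‖lamP k - lamM k‖) →
      ∀ (σ : Fin (n + 1) → Bool) (U₁ U₂ : Finset (Fin (n + 1))),
        U₁.card = m → U₂.card = m → U₁ ≠ U₂ →
        0 < Sof (coefOf lamP lamM (flipped σ U₁)) r →
        0 < Sof (coefOf lamP lamM (flipped σ U₂)) r →
        (∀ k ∈ U₁, δ * Sof (coefOf lamP lamM (flipped σ U₁)) r ≤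
          ‖coefOf lamP lamM (flipped σ U₁) k - a‖ * r ^ (k : ℕ)) →
        (∀ k ∈ U₂, δ * Sof (coefOf lamP lamM (flipped σ U₂)) r ≤
          ‖coefOf lamP lamM (flipped σ U₂) k - a‖ * r ^ (k : ℕ)) →
        (∀ θ ∈ Set.Icc α β,
          ‖Pval (coefOf lamP lamM (flipped σ U₁))
              ((r : ℂ) * Complex.exp (Complex.I * (θ : ℂ)))‖ ≤
            δ₁ * Sof (coefOf lamP lamM (flipped σ U₁)) r) →
        (∀ θ ∈ Set.Icc α β,
          ‖Pval (coefOf lamP lamM (flipped σ U₂))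
              ((r : ℂ) * Complex.exp (Complex.I * (θ : ℂ)))‖ ≤
            δ₁ * Sof (coefOf lamP lamM (flipped σ U₂)) r) →
        (1 / 4) * δ * (b * (β - α)) ^ (2 * m - 1) < δ₁ := by
  refine ⟨1 / (4 * π * Real.exp 1), by positivity, ?_⟩
  intro n m _ hm r δ δ₁ hr hδ hδ₁ α β hαβ hβα lamP lamM a hlam σ U₁ U₂ hU₁ hU₂ hne hS₁ hS₂
    hδU₁ hδU₂ hmax₁ hmax₂
  have hkey : 1 / 4 * δ * ((β - α) / (2 * π * Real.exp 1)) ^ (2 * m - 1) ≤ δ₁ := by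
    rcases le_total (Sof (coefOf lamP lamM (flipped σ U₂)) r)
      (Sof (coefOf lamP lamM (flipped σ U₁)) r) with h | h
    · exact quarter_mul_pow_le_of_flips hr.le hδ.le hδ₁.le hαβ.le hβα hlam hU₁ hU₂ hne hS₁ h
        hδU₁ hmax₁ hmax₂
    · exact quarter_mul_pow_le_of_flips hr.le hδ.le hδ₁.le hαβ.le hβα hlam hU₂ hU₁ hne.symm hS₂ h
        hδU₂ hmax₂ hmax₁
  refine lt_of_lt_of_le (mul_lt_mul_of_pos_left (pow_lt_pow_left₀ ?_ ?_ (by omega))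
    (by positivity)) hkey
  · rw [lt_div_iff₀ (by positivity)]
    have : 1 / (4 * π * Real.exp 1) * (β - α) * (2 * π * Real.exp 1) = (β - α) / 2 := by
      field_simp; ring
    linarith
  · exact mul_nonneg (by positivity) (by linarith)
end

section
/- Let F be analytic on the open unit disk D = {z ∈ ℂ : |z| < 1}, not identically zero, and bounded on D. Let N denote the number of zeros of F in the closed disk {|z| ≤ ½}, counted with multiplicities. Then max_{|z|≤1/2} |F(z)| ≤ (4/5)^N · sup_{|z|<1} |F(z)|. -/
/-!
Divide out the zeros by Blaschke factors: `H(w) = G(w) ∏ᵢ (1 - conj ρᵢ * w)` is holomorphic on the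
unit disk and `F = H ∏ᵢ bᵢ` with `bᵢ(w) = (w - ρᵢ) / (1 - conj ρᵢ * w)`. Since `|bᵢ| → 1` uniformly
on circles `|w| = r` as `r → 1`, the maximum modulus principle gives `|H| ≤ sup |F|`. On `|z| ≤ s`,
every `|bᵢ(z)|` is at most `2s / (1 + s²)`, which is `4/5` for `s = 1/2`.
-/

open Metric Filter Topology ComplexConjugate

theorem Complex.sq_norm_one_sub_conj_mul (ρ w : ℂ) :
    ‖1 - conj ρ * w‖ ^ 2 = ‖w - ρ‖ ^ 2 + (1 - ‖ρ‖ ^ 2) * (1 - ‖w‖ ^ 2) := by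
  simp only [Complex.sq_norm, Complex.normSq_apply, Complex.sub_re, Complex.sub_im,
    Complex.mul_re, Complex.mul_im, Complex.one_re, Complex.one_im, Complex.conj_re,
    Complex.conj_im]
  ring

theorem Complex.norm_sub_le_mul_norm_one_sub_conj_mul {s : ℝ} (hs : s ≤ 1) {z ρ : ℂ}
    (hz : ‖z‖ ≤ s) (hρ : ‖ρ‖ ≤ s) :
    ‖z - ρ‖ ≤ 2 * s / (1 + s ^ 2) * ‖1 - conj ρ * z‖ := by
  have hs0 : 0 ≤ s := (norm_nonneg z).trans hz
  have hd : ‖z - ρ‖ ≤ 2 * s := (norm_sub_le z ρ).trans (by linarith)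
  have hzs : 1 - s ^ 2 ≤ 1 - ‖z‖ ^ 2 := by nlinarith [norm_nonneg z]
  have hρs : 1 - s ^ 2 ≤ 1 - ‖ρ‖ ^ 2 := by nlinarith [norm_nonneg ρ]
  have h1s : 0 ≤ 1 - s ^ 2 := by nlinarith
  have key : ((1 + s ^ 2) * ‖z - ρ‖) ^ 2 ≤ (2 * s * ‖1 - conj ρ * z‖) ^ 2 := by
    have hprod : (1 - s ^ 2) ^ 2 ≤ (1 - ‖ρ‖ ^ 2) * (1 - ‖z‖ ^ 2) := by
      nlinarith [mul_le_mul hρs hzs h1s (h1s.trans hρs)]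
    rw [mul_pow, mul_pow, Complex.sq_norm_one_sub_conj_mul]
    have hd2 : ‖z - ρ‖ ^ 2 ≤ (2 * s) ^ 2 := pow_le_pow_left₀ (norm_nonneg _) hd 2
    nlinarith [mul_le_mul_of_nonneg_left hd2 (sq_nonneg (1 - s ^ 2)),
      mul_le_mul_of_nonneg_left hprod (sq_nonneg (2 * s))]
  rw [div_mul_eq_mul_div, le_div_iff₀ (by positivity), mul_comm]
  exact (pow_le_pow_iff_left₀ (by positivity) (by positivity) two_ne_zero).1 key

theorem Complex.norm_one_sub_conj_mul_le_mul_norm_sub {s : ℝ} {w ρ : ℂ} (hρ : ‖ρ‖ ≤ s)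
    (hsw : s < ‖w‖) (hw : ‖w‖ ≤ 1) :
    ‖1 - conj ρ * w‖ ≤ (1 + (1 - ‖w‖ ^ 2) / (‖w‖ - s) ^ 2) * ‖w - ρ‖ := by
  set x := (1 - ‖w‖ ^ 2) / (‖w‖ - s) ^ 2
  have hgap : 0 < (‖w‖ - s) ^ 2 := pow_pos (by linarith) 2
  have hx : 0 ≤ x := div_nonneg (by nlinarith [norm_nonneg w]) hgap.le
  have hd : (‖w‖ - s) ^ 2 ≤ ‖w - ρ‖ ^ 2 :=
    pow_le_pow_left₀ (by linarith) (by linarith [norm_sub_norm_le w ρ]) 2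
  have hxd : 1 - ‖w‖ ^ 2 ≤ x * ‖w - ρ‖ ^ 2 := by
    calc 1 - ‖w‖ ^ 2 = x * (‖w‖ - s) ^ 2 := (div_mul_cancel₀ _ hgap.ne').symm
      _ ≤ x * ‖w - ρ‖ ^ 2 := mul_le_mul_of_nonneg_left hd hx
  have key : ‖1 - conj ρ * w‖ ^ 2 ≤ ((1 + x) * ‖w - ρ‖) ^ 2 := by
    rw [Complex.sq_norm_one_sub_conj_mul, mul_pow]
    nlinarith [norm_nonneg ρ, mul_nonneg (sq_nonneg x) (sq_nonneg ‖w - ρ‖),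
      mul_le_mul_of_nonneg_right (sq_nonneg ‖ρ‖) (by nlinarith [norm_nonneg w] : (0:ℝ) ≤ 1 - ‖w‖ ^ 2)]
  exact (pow_le_pow_iff_left₀ (norm_nonneg _) (by positivity) two_ne_zero).1 key

theorem norm_prod_le_pow_mul_norm_prod {ι 𝕜 : Type*} [NormedField 𝕜] (s : Finset ι)
    {f g : ι → 𝕜} {c : ℝ} (h : ∀ i ∈ s, ‖f i‖ ≤ c * ‖g i‖) :
    ‖∏ i ∈ s, f i‖ ≤ c ^ s.card * ‖∏ i ∈ s, g i‖ := by
  rw [norm_prod, norm_prod, ← Finset.prod_const, ← Finset.prod_mul_distrib]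
  exact Finset.prod_le_prod (fun i _ => norm_nonneg _) h

theorem Complex.norm_le_of_forall_sphere_norm_le_of_tendsto {E : Type*} [NormedAddCommGroup E]
    [NormedSpace ℂ E] {f : ℂ → E} (hf : DifferentiableOn ℂ f (ball 0 1)) {C : ℝ → ℝ} {L : ℝ}
    (hC : Tendsto C (𝓝[<] 1) (𝓝 L)) (hbound : ∀ᶠ r in 𝓝[<] 1, ∀ w ∈ sphere (0 : ℂ) r, ‖f w‖ ≤ C r)
    {z : ℂ} (hz : z ∈ ball (0 : ℂ) 1) : ‖f z‖ ≤ L := by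
  rw [mem_ball_zero_iff] at hz
  refine ge_of_tendsto hC ?_
  filter_upwards [hbound, Ioo_mem_nhdsLT hz] with r hr hzr
  have hr0 : r ≠ 0 := by linarith [norm_nonneg z, hzr.1]
  refine Complex.norm_le_of_forall_mem_frontier_norm_le isBounded_ball
    (hf.diffContOnCl_ball (closedBall_subset_ball hzr.2)) (by rwa [frontier_ball 0 hr0]) ?_
  rw [closure_ball 0 hr0, mem_closedBall_zero_iff]
  exact hzr.1.le

theorem norm_le_pow_mul_sSup_of_eq_prod_mul {ι : Type*} [Fintype ι] {F G : ℂ → ℂ} {ρ : ι → ℂ}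
    {s : ℝ} (hs : s < 1) (hFbd : BddAbove ((fun w => ‖F w‖) '' ball (0 : ℂ) 1))
    (hρ : ∀ i, ρ i ∈ closedBall (0 : ℂ) s) (hG : DifferentiableOn ℂ G (ball (0 : ℂ) 1))
    (hfac : ∀ z ∈ ball (0 : ℂ) 1, F z = (∏ i, (z - ρ i)) * G z)
    {z : ℂ} (hz : z ∈ closedBall (0 : ℂ) s) :
    ‖F z‖ ≤ (2 * s / (1 + s ^ 2)) ^ Fintype.card ι * sSup ((fun w => ‖F w‖) '' ball (0 : ℂ) 1) := by
  set M := sSup ((fun w => ‖F w‖) '' ball (0 : ℂ) 1)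
  simp only [mem_closedBall_zero_iff] at hρ hz
  have hs0 : 0 ≤ s := (norm_nonneg z).trans hz
  have hM : ∀ w ∈ ball (0 : ℂ) 1, ‖F w‖ ≤ M := fun w hw => le_csSup hFbd ⟨w, hw, rfl⟩
  set B : ℂ → ℂ := fun w => ∏ i, (1 - conj (ρ i) * w)
  have hBG : DifferentiableOn ℂ (fun w => B w * G w) (ball (0 : ℂ) 1) :=
    (Differentiable.differentiableOn (by fun_prop)).mul hG
  have hsphere : ∀ᶠ r in 𝓝[<] 1, ∀ w ∈ sphere (0 : ℂ) r,
      ‖B w * G w‖ ≤ (1 + (1 - r ^ 2) / (r - s) ^ 2) ^ Fintype.card ι * M := by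
    filter_upwards [Ioo_mem_nhdsLT hs] with r hr w hw
    rw [mem_sphere_zero_iff_norm] at hw
    have hw1 : w ∈ ball (0 : ℂ) 1 := mem_ball_zero_iff.2 (hw ▸ hr.2)
    calc ‖B w * G w‖ = ‖B w‖ * ‖G w‖ := norm_mul _ _
      _ ≤ (1 + (1 - r ^ 2) / (r - s) ^ 2) ^ Fintype.card ι * ‖∏ i, (w - ρ i)‖ * ‖G w‖ := by
        gcongr
        exact norm_prod_le_pow_mul_norm_prod _ fun i _ => hw ▸
          Complex.norm_one_sub_conj_mul_le_mul_norm_sub (hρ i) (hw ▸ hr.1) (hw ▸ hr.2.le)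
      _ ≤ _ := by
        rw [mul_assoc, ← norm_mul, ← hfac w hw1]
        have : 0 ≤ (1 - r ^ 2) / (r - s) ^ 2 :=
          div_nonneg (by nlinarith [hr.1, hr.2]) (sq_nonneg _)
        exact mul_le_mul_of_nonneg_left (hM w hw1) (pow_nonneg (by linarith) _)
  have hlim : Tendsto (fun r => (1 + (1 - r ^ 2) / (r - s) ^ 2) ^ Fintype.card ι * M)
      (𝓝[<] 1) (𝓝 M) := by
    have hcont : ContinuousAt (fun r => (1 + (1 - r ^ 2) / (r - s) ^ 2) ^ Fintype.card ι * M) 1 := by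
      fun_prop (disch := exact pow_ne_zero 2 (sub_ne_zero.2 hs.ne'))
    simpa using hcont.tendsto.mono_left nhdsWithin_le_nhds
  have hBGz := Complex.norm_le_of_forall_sphere_norm_le_of_tendsto hBG hlim hsphere
    (mem_ball_zero_iff.2 (hz.trans_lt hs))
  calc ‖F z‖ = ‖∏ i, (z - ρ i)‖ * ‖G z‖ := by
        rw [hfac z (mem_ball_zero_iff.2 (hz.trans_lt hs)), norm_mul]
    _ ≤ (2 * s / (1 + s ^ 2)) ^ Fintype.card ι * ‖B z‖ * ‖G z‖ := by
        gcongr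
        exact norm_prod_le_pow_mul_norm_prod _ fun i _ =>
          Complex.norm_sub_le_mul_norm_one_sub_conj_mul hs.le hz (hρ i)
    _ ≤ _ := by
        rw [mul_assoc, ← norm_mul]
        gcongr

theorem jensen_bound_general
    (F : ℂ → ℂ)
    (hFbd : BddAbove ((fun w => ‖F w‖) '' ball (0 : ℂ) 1))
    (N : ℕ) (ρ : Fin N → ℂ) (hρ : ∀ i, ρ i ∈ closedBall (0 : ℂ) (1 / 2))
    (G : ℂ → ℂ) (hG : DifferentiableOn ℂ G (ball (0 : ℂ) 1))
    (hfac : ∀ z ∈ ball (0 : ℂ) 1, F z = (∏ i : Fin N, (z - ρ i)) * G z) :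
    ∀ z ∈ closedBall (0 : ℂ) (1 / 2),
      ‖F z‖ ≤
        (4 / 5 : ℝ) ^ N * sSup ((fun w => ‖F w‖) '' ball (0 : ℂ) 1) := by
  intro z hz
  have h := norm_le_pow_mul_sSup_of_eq_prod_mul (by norm_num) hFbd hρ hG hfac hz
  rw [Fintype.card_fin] at h
  convert h using 3
  norm_num

/-- **Jensen's bound.** Let `F` be analytic, not identically zero, and bounded on the open
unit disk. If `F` has exactly `N` zeros (with multiplicities) in the closed disk of radius
`½` — encoded by the factorization `F(z) = ∏_{i<N} (z − ρ_i) · G(z)` with all `ρ_i` in the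
closed disk of radius `½` and `G` analytic on the unit disk and zero-free on the closed
disk of radius `½` — then `max_{|z|≤1/2} |F(z)| ≤ (4/5)^N · sup_{|z|<1} |F(z)|`. -/
theorem jensen_bound
    (F : ℂ → ℂ) (hF : DifferentiableOn ℂ F (ball (0 : ℂ) 1))
    (hFne : ∃ z ∈ ball (0 : ℂ) 1, F z ≠ 0)
    (hFbd : BddAbove ((fun w => ‖F w‖) '' ball (0 : ℂ) 1))
    (N : ℕ) (ρ : Fin N → ℂ) (hρ : ∀ i, ρ i ∈ closedBall (0 : ℂ) (1 / 2))
    (G : ℂ → ℂ) (hG : DifferentiableOn ℂ G (ball (0 : ℂ) 1))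
    (hfac : ∀ z ∈ ball (0 : ℂ) 1, F z = (∏ i : Fin N, (z - ρ i)) * G z)
    (hGne : ∀ z ∈ closedBall (0 : ℂ) (1 / 2), G z ≠ 0) :
    ∀ z ∈ closedBall (0 : ℂ) (1 / 2),
      ‖F z‖ ≤
        (4 / 5 : ℝ) ^ N * sSup ((fun w => ‖F w‖) '' ball (0 : ℂ) 1) :=
  jensen_bound_general F hFbd N ρ hρ G hG hfac
end

section
/- For every integer N ≥ 1 and every list z_1,…,z_{2N} of complex numbers (repetitions allowed), there exist a point a ∈ ℂ and a partition of the index set {1,…,2N} into N two-element blocks such that every block {i,j} satisfies |z_i − z_j| ≥ ½(|z_i − a| + |z_j − a|). -/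
/-!
Among all perfect matchings of the points choose one of maximal total length, and let `a` be the
midpoint of its shortest pair `{k, m}`. Maximality forbids improving the matching by exchanging
partners between a pair `{p, q}` and `{k, m}`, so `|p - k| + |q - m|` and `|p - m| + |q - k|` are
both at most `|p - q| + |k - m| ≤ 2 |p - q|`. Since `|p - a| ≤ (|p - k| + |p - m|) / 2`, and
likewise for `q`, summing gives `|p - a| + |q - a| ≤ 2 |p - q|`.
-/

open Finset

variable {ι X : Type*}

/-- A perfect matching of `ι`, encoded as the fixed-point-free involution sending each element
to its partner. -/
def IsPerfectPairing (π : Equiv.Perm ι) : Prop :=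
  Function.Involutive π ∧ ∀ i, π i ≠ i

namespace IsPerfectPairing

variable {π : Equiv.Perm ι}

theorem conj (h : IsPerfectPairing π) (c : Equiv.Perm ι) : IsPerfectPairing (c * π * c⁻¹) := by
  refine ⟨fun i => ?_, fun i hi => h.2 (c⁻¹ i) ?_⟩
  · simp [Equiv.Perm.mul_apply, h.1 _]
  · simpa [Equiv.Perm.mul_apply, ← Equiv.eq_symm_apply] using hi

end IsPerfectPairing

theorem exists_isPerfectPairing_of_even_card [Fintype ι] (h : Even (Fintype.card ι)) :
    ∃ π : Equiv.Perm ι, IsPerfectPairing π := by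
  obtain ⟨N, hN⟩ := h
  let e : ι ≃ Fin 2 × Fin N :=
    (Fintype.equivFin ι).trans ((finCongr (by omega)).trans finProdFinEquiv.symm)
  refine ⟨e.trans ((Equiv.prodCongr (Equiv.swap 0 1) (Equiv.refl _)).trans e.symm),
    fun i => by simp [Prod.map], fun i hi => ?_⟩
  have := congrArg (fun i => (e i).1) hi
  revert this
  simp only [Equiv.trans_apply, Equiv.apply_symm_apply, Equiv.prodCongr_apply, Prod.map_fst]
  generalize (e i).1 = j
  fin_cases j <;> decide

section Metric

variable [Fintype ι] [PseudoMetricSpace X]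

/-- Each pair of the matching is counted twice. -/
def pairingLength (z : ι → X) (π : Equiv.Perm ι) : ℝ :=
  ∑ i, dist (z i) (z (π i))

theorem exists_isPerfectPairing_isMaxOn (z : ι → X) (h : ∃ π : Equiv.Perm ι, IsPerfectPairing π) :
    ∃ π, IsPerfectPairing π ∧ IsMaxOn (pairingLength z) {σ | IsPerfectPairing σ} π := by
  classical
  obtain ⟨π, hπ, hmax⟩ := Set.exists_max_image _ (pairingLength z) (Set.toFinite _) h
  exact ⟨π, hπ, isMaxOn_iff.mpr hmax⟩

variable {z : ι → X} {π : Equiv.Perm ι}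

theorem IsPerfectPairing.pairingLength_swap_conj_sub [DecidableEq ι] (hπ : IsPerfectPairing π)
    {p t : ι} (htp : t ≠ p) (htq : t ≠ π p) :
    pairingLength z (Equiv.swap (π p) t * π * (Equiv.swap (π p) t)⁻¹) - pairingLength z π =
      2 * (dist (z p) (z t) + dist (z (π p)) (z (π t))) -
        2 * (dist (z p) (z (π p)) + dist (z t) (z (π t))) := by
  set q := π p
  set u := π t
  set σ := Equiv.swap q t * π * (Equiv.swap q t)⁻¹
  have hσ : ∀ x, σ x = Equiv.swap q t (π (Equiv.swap q t x)) := fun x => by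
    simp [σ, Equiv.Perm.mul_apply]
  have hqp : π q = p := hπ.1 p
  have hut : π u = t := hπ.1 t
  have hpq : p ≠ q := fun h => hπ.2 p h.symm
  have htu : t ≠ u := fun h => hπ.2 t h.symm
  have hpu : p ≠ u := fun h => htq (by rw [← hut, ← h])
  have hqu : q ≠ u := fun h => htp (by rw [← hut, ← h, hqp])
  have hoff : ∀ x ∉ ({p, q, t, u} : Finset ι), σ x = π x := by
    intro x hx
    simp only [mem_insert, mem_singleton, not_or] at hx
    obtain ⟨hxp, hxq, hxt, hxu⟩ := hx
    have hπxq : π x ≠ q := fun h => hxp (by rw [← hπ.1 x, h, hqp])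
    have hπxt : π x ≠ t := fun h => hxu (by rw [← hπ.1 x, h])
    rw [hσ, Equiv.swap_apply_of_ne_of_ne hxq hxt, Equiv.swap_apply_of_ne_of_ne hπxq hπxt]
  have hdiff : pairingLength z σ - pairingLength z π =
      ∑ x ∈ {p, q, t, u}, (dist (z x) (z (σ x)) - dist (z x) (z (π x))) := by
    rw [pairingLength, pairingLength, ← sum_sub_distrib]
    exact (sum_subset (subset_univ _) fun x _ hx => by simp [hoff x hx]).symm
  have hσp : σ p = t := by
    rw [hσ, Equiv.swap_apply_of_ne_of_ne hpq htp.symm, Equiv.swap_apply_left]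
  have hσq : σ q = u := by
    rw [hσ, Equiv.swap_apply_left, Equiv.swap_apply_of_ne_of_ne hqu.symm htu.symm]
  have hσt : σ t = p := by
    rw [hσ, Equiv.swap_apply_right, hqp, Equiv.swap_apply_of_ne_of_ne hpq htp.symm]
  have hσu : σ u = q := by
    rw [hσ, Equiv.swap_apply_of_ne_of_ne hqu.symm htu.symm, hut, Equiv.swap_apply_right]
  rw [hdiff, sum_insert (by simp [hpq, htp.symm, hpu]), sum_insert (by simp [htq.symm, hqu]),
    sum_insert (by simp [htu]), sum_singleton, hσp, hσq, hσt, hσu, hqp, hut,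
    dist_comm (z q) (z p), dist_comm (z t) (z p), dist_comm (z u) (z t), dist_comm (z u) (z q)]
  ring

theorem IsPerfectPairing.dist_add_dist_le_of_isMax (hπ : IsPerfectPairing π)
    (hmax : IsMaxOn (pairingLength z) {σ | IsPerfectPairing σ} π) (p t : ι) :
    dist (z p) (z t) + dist (z (π p)) (z (π t)) ≤
      dist (z p) (z (π p)) + dist (z t) (z (π t)) := by
  classical
  by_cases htp : t = p
  · subst htp
    simp only [dist_self, add_zero]
    exact add_nonneg dist_nonneg dist_nonneg
  by_cases htq : t = π p
  · rw [htq, hπ.1 p]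
  have hswap := hπ.pairingLength_swap_conj_sub (z := z) htp htq
  have hle := isMaxOn_iff.mp hmax _ (hπ.conj (Equiv.swap (π p) t))
  linarith

end Metric

theorem dist_midpoint_le {E : Type*} [SeminormedAddCommGroup E] [NormedSpace ℝ E] (p x y : E) :
    dist p (midpoint ℝ x y) ≤ (dist p x + dist p y) / 2 := by
  simpa using dist_midpoint_midpoint_le p p x y

theorem IsPerfectPairing.dist_add_dist_midpoint_le {E : Type*} [SeminormedAddCommGroup E]
    [NormedSpace ℝ E] [Fintype ι] {z : ι → E} {π : Equiv.Perm ι} (hπ : IsPerfectPairing π)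
    (hmax : IsMaxOn (pairingLength z) {σ | IsPerfectPairing σ} π) {k : ι}
    (hk : ∀ i, dist (z k) (z (π k)) ≤ dist (z i) (z (π i))) (i : ι) :
    dist (z i) (midpoint ℝ (z k) (z (π k))) + dist (z (π i)) (midpoint ℝ (z k) (z (π k))) ≤
      2 * dist (z i) (z (π i)) := by
  have hi := dist_midpoint_le (z i) (z k) (z (π k))
  have hπi := dist_midpoint_le (z (π i)) (z k) (z (π k))
  have hxk := hπ.dist_add_dist_le_of_isMax hmax i k
  have hxπk := hπ.dist_add_dist_le_of_isMax hmax i (π k)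
  rw [hπ.1 k, dist_comm (z (π k)) (z k)] at hxπk
  linarith [hk i]

/-- **Pairing lemma.** For every `N ≥ 1` and every list `z_1,…,z_{2N}` of complex numbers
there exist a point `a ∈ ℂ` and a partition of `{1,…,2N}` into `N` two-element blocks
(encoded by a fixed-point-free involution `π` pairing each index with its partner) such
that every block `{i, π i}` satisfies `|z_i − z_{π i}| ≥ ½(|z_i − a| + |z_{π i} − a|)`. -/
theorem pairing_with_center (N : ℕ) (hN : 1 ≤ N) (z : Fin (2 * N) → ℂ) :
    ∃ (a : ℂ) (π : Equiv.Perm (Fin (2 * N))),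
      (∀ i, π (π i) = i) ∧ (∀ i, π i ≠ i) ∧
      (∀ i, (1 / 2) * (‖z i - a‖ + ‖z (π i) - a‖) ≤
        ‖z i - z (π i)‖) := by
  obtain ⟨π, hπ, hmax⟩ :=
    exists_isPerfectPairing_isMaxOn z (exists_isPerfectPairing_of_even_card (by simp))
  have : Nonempty (Fin (2 * N)) := ⟨⟨0, by omega⟩⟩
  obtain ⟨k, hk⟩ := Finite.exists_min fun i => dist (z i) (z (π i))
  refine ⟨midpoint ℝ (z k) (z (π k)), π, hπ.1, hπ.2, fun i => ?_⟩
  have hcenter := hπ.dist_add_dist_midpoint_le hmax hk i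
  simp only [dist_eq_norm] at hcenter
  linarith
end

section
/- For every Borel probability measure μ on ℂ there exist a point a ∈ ℂ and a Borel probability measure ρ on ℂ × ℂ such that both marginals of ρ equal μ, ρ is invariant under the coordinate swap (x,y) ↦ (y,x), and ρ({ (x,y) ∈ ℂ × ℂ : |x − y| ≥ ½(|x − a| + |y − a|) }) = 1. -/
/-!
Let `a = m₁ + m₂ i`, where `m₁` and `m₂` are medians of the real and imaginary parts under `μ`.
Because `a` is a median in both coordinates, `μ` splits as `ν₁ + ν₂ + ν₃ + ν₄` with `νₖ`
carried by the `k`-th closed quadrant around `a` and `ν₁(ℂ) = ν₃(ℂ)`, `ν₂(ℂ) = ν₄(ℂ)` (mass on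
the median lines is shared fractionally). Coupling opposite quadrants by the symmetrized products
`(ν₁ ⊗ ν₃ + ν₃ ⊗ ν₁) / ν₁(ℂ) + (ν₂ ⊗ ν₄ + ν₄ ⊗ ν₂) / ν₂(ℂ)` gives a swap-invariant coupling of `μ`
with itself. For `x - a` and `y - a` in opposite quadrants the real parts and the imaginary parts
have opposite signs, so `|x - y|² ≥ |x - a|² + |y - a|²` and `|x - y| ≥ max |x - a| |y - a|`.
-/

open MeasureTheory ProbabilityTheory Set Filter
open scoped ENNReal

theorem Complex.norm_le_norm_sub_of_mul_nonpos {u v : ℂ} (hre : u.re * v.re ≤ 0)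
    (him : u.im * v.im ≤ 0) : ‖u‖ ≤ ‖u - v‖ := by
  rw [Complex.norm_def, Complex.norm_def]
  gcongr
  simp only [Complex.normSq_apply, Complex.sub_re, Complex.sub_im]
  nlinarith [mul_self_nonneg v.re, mul_self_nonneg v.im]

theorem Complex.half_add_norm_le_norm_sub {x y a : ℂ} (hre : (x.re - a.re) * (y.re - a.re) ≤ 0)
    (him : (x.im - a.im) * (y.im - a.im) ≤ 0) : 1 / 2 * (‖x - a‖ + ‖y - a‖) ≤ ‖x - y‖ := by
  have hx := norm_le_norm_sub_of_mul_nonpos (u := x - a) (v := y - a) (by simpa) (by simpa)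
  have hy := norm_le_norm_sub_of_mul_nonpos (u := y - a) (v := x - a)
    (by simpa [mul_comm] using hre) (by simpa [mul_comm] using him)
  rw [sub_sub_sub_cancel_right] at hx hy
  rw [norm_sub_rev y x] at hy
  linarith

theorem exists_median {X : Type*} [MeasurableSpace X] (μ : Measure X) [IsProbabilityMeasure μ]
    {f : X → ℝ} (hf : Measurable f) :
    ∃ m, μ {x | f x < m} ≤ 1 / 2 ∧ 1 / 2 ≤ μ {x | f x ≤ m} := by
  have := Measure.isProbabilityMeasure_map (μ := μ) hf.aemeasurable
  set F := cdf (μ.map f)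
  set s := {x | (1 / 2 : ℝ) ≤ F x}
  have hs : s.Nonempty :=
    ((tendsto_cdf_atTop _).eventually (eventually_ge_nhds (by norm_num))).exists
  obtain ⟨x₀, hx₀⟩ := eventually_atBot.1
    ((tendsto_cdf_atBot _).eventually (eventually_lt_nhds (show (0 : ℝ) < 1 / 2 by norm_num)))
  have hbdd : BddBelow s := ⟨x₀, fun x hx => not_lt.1 fun h => (hx₀ x h.le).not_ge hx⟩
  have half : (1 / 2 : ℝ≥0∞) = ENNReal.ofReal (1 / 2) := by
    rw [ENNReal.ofReal_div_of_pos two_pos]; simp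
  refine ⟨sInf s, ?_, ?_⟩
  · refine (Measure.map_apply hf measurableSet_Iio).symm.trans_le ?_
    rw [← measure_cdf (μ.map f), F.measure_Iio (tendsto_cdf_atBot _), sub_zero, half]
    refine ENNReal.ofReal_le_ofReal ?_
    rw [Monotone.leftLim_eq_sSup F.mono]
    exact csSup_le (nonempty_Iio.image F) (forall_mem_image.2 fun x hx =>
      (not_le.1 (show x ∉ s from notMem_of_lt_csInf hx hbdd)).le)
  · refine le_of_le_of_eq ?_ (Measure.map_apply hf measurableSet_Iic)
    rw [← measure_cdf (μ.map f), F.measure_Iic (tendsto_cdf_atBot _), sub_zero, half]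
    refine ENNReal.ofReal_le_ofReal (ge_of_tendsto
      ((F.right_continuous _).mono Ioi_subset_Ici_self) ?_)
    filter_upwards [self_mem_nhdsWithin] with x hx
    obtain ⟨y, hy, hyx⟩ := exists_lt_of_csInf_lt hs hx
    exact hy.trans (F.mono hyx.le)

theorem ENNReal.exists_add_eq_of_le_of_le {x₁ y₁ x₂ y₂ m : ℝ≥0∞} (hm : m ≠ ∞) (h₁ : x₁ ≤ y₁)
    (h₂ : x₂ ≤ y₂) (hx : x₁ + x₂ ≤ m) (hy : m ≤ y₁ + y₂) :
    ∃ s₁ s₂, s₁ + s₂ = m ∧ x₁ ≤ s₁ ∧ s₁ ≤ y₁ ∧ x₂ ≤ s₂ ∧ s₂ ≤ y₂ := by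
  set s₁ := max x₁ (m - y₂)
  have hs₁m : s₁ ≤ m := max_le (le_self_add.trans hx) tsub_le_self
  have hx₂s₁ : s₁ + x₂ ≤ m := by
    rw [max_add]
    refine max_le hx ((add_le_add_left (tsub_le_tsub_left h₂ m) _).trans ?_)
    rw [tsub_add_cancel_of_le (le_add_self.trans hx)]
  refine ⟨s₁, m - s₁, add_tsub_cancel_of_le hs₁m, le_max_left _ _,
    max_le h₁ (tsub_le_iff_left.2 (by rwa [add_comm])),
    ENNReal.le_sub_of_add_le_left (ne_top_of_le_ne_top hm hs₁m) hx₂s₁,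
    tsub_le_iff_left.2 ?_⟩
  exact le_tsub_add.trans (by gcongr; exact le_max_right _ _)

namespace MeasureTheory.Measure

variable {X : Type*} [MeasurableSpace X]

theorem exists_eq_add_of_le_of_le (ν : Measure X) [IsFiniteMeasure ν] {A B : Set X}
    (hA : MeasurableSet A) (hB : MeasurableSet B) (hAB : A ⊆ B) {t : ℝ≥0∞} (hAt : ν A ≤ t)
    (htB : t ≤ ν B) :
    ∃ νL νR : Measure X, ν = νL + νR ∧ νL univ = t ∧ (∀ᵐ x ∂νL, x ∈ B) ∧ (∀ᵐ x ∂νR, x ∉ A) ∧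
      IsFiniteMeasure νL ∧ IsFiniteMeasure νR := by
  have hBA : ν A + ν (B \ A) = ν B := by
    rw [← measure_inter_add_sdiff B hA, inter_eq_right.2 hAB]
  have hrestrict : ν.restrict A + ν.restrict (B \ A) = ν.restrict B := by
    rw [← restrict_inter_add_sdiff B hA, inter_eq_right.2 hAB]
  set c := (t - ν A) / ν (B \ A)
  have hc : c ≤ 1 :=
    ENNReal.div_le_of_le_mul (by rw [one_mul]; exact tsub_le_iff_left.2 (hBA ▸ htB))
  have hν : ν = (ν.restrict A + c • ν.restrict (B \ A)) +
      (ν.restrict Bᶜ + (1 - c) • ν.restrict (B \ A)) :=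
    calc ν = ν.restrict A + ν.restrict (B \ A) + ν.restrict Bᶜ := by
          rw [hrestrict, restrict_add_restrict_compl hB]
      _ = ν.restrict A + (c • ν.restrict (B \ A) + (1 - c) • ν.restrict (B \ A))
            + ν.restrict Bᶜ := by rw [← add_smul, add_tsub_cancel_of_le hc, one_smul]
      _ = _ := by abel
  refine ⟨_, _, hν, ?_, ?_, ?_,
    isFiniteMeasure_of_le ν ((Measure.le_add_right le_rfl).trans_eq hν.symm),
    isFiniteMeasure_of_le ν ((Measure.le_add_left le_rfl).trans_eq hν.symm)⟩
  · suffices ν A + c * ν (B \ A) = t by simpa using this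
    rcases eq_or_ne (ν (B \ A)) 0 with h0 | h0
    · rw [h0, mul_zero, add_zero]
      exact le_antisymm hAt (htB.trans (by rw [← hBA, h0, add_zero]))
    · rw [ENNReal.div_mul_cancel h0 (measure_ne_top _ _), add_tsub_cancel_of_le hAt]
  · rw [ae_add_measure_iff]
    exact ⟨ae_restrict_of_forall_mem hA fun x hx => hAB hx,
      ae_smul_measure (ae_restrict_of_forall_mem (hB.diff hA) fun x hx => hx.1) _⟩
  · rw [ae_add_measure_iff]
    exact ⟨ae_restrict_of_forall_mem hB.compl fun x hx hxA => hx (hAB hxA),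
      ae_smul_measure (ae_restrict_of_forall_mem (hB.diff hA) fun x hx => hx.2) _⟩

noncomputable def symmProd (α β : Measure X) : Measure (X × X) :=
  (α univ)⁻¹ • (α.prod β + β.prod α)

variable {α β : Measure X}

theorem ae_symmProd {p q : X → Prop} (hα : ∀ᵐ x ∂α, p x) (hβ : ∀ᵐ x ∂β, q x) :
    ∀ᵐ z ∂symmProd α β, p z.1 ∧ q z.2 ∨ q z.1 ∧ p z.2 := by
  refine ae_smul_measure (ae_add_measure_iff.2 ⟨?_, ?_⟩) _
  · filter_upwards [quasiMeasurePreserving_fst.ae hα, quasiMeasurePreserving_snd.ae hβ]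
      with z h₁ h₂ using Or.inl ⟨h₁, h₂⟩
  · filter_upwards [quasiMeasurePreserving_fst.ae hβ, quasiMeasurePreserving_snd.ae hα]
      with z h₁ h₂ using Or.inr ⟨h₁, h₂⟩

variable [SFinite α] [SFinite β]

theorem map_swap_symmProd : (symmProd α β).map Prod.swap = symmProd α β := by
  rw [symmProd, Measure.map_smul, Measure.map_add _ _ measurable_swap, prod_swap, prod_swap,
    add_comm]

theorem map_fst_symmProd (hαβ : α univ = β univ) (hα : α univ ≠ ∞) :
    (symmProd α β).map Prod.fst = α + β := by
  rw [symmProd, Measure.map_smul, Measure.map_add _ _ measurable_fst, map_fst_prod,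
    map_fst_prod, ← hαβ, ← smul_add, smul_smul]
  rcases eq_or_ne (α univ) 0 with h0 | h0
  · rw [measure_univ_eq_zero.1 h0, measure_univ_eq_zero.1 (hαβ ▸ h0 : β univ = 0)]
    simp
  · rw [ENNReal.inv_mul_cancel h0 hα, one_smul]

theorem map_snd_symmProd (hαβ : α univ = β univ) (hα : α univ ≠ ∞) :
    (symmProd α β).map Prod.snd = α + β := by
  rw [← map_swap_symmProd, map_map measurable_snd measurable_swap]
  exact map_fst_symmProd hαβ hα

end MeasureTheory.Measure

theorem exists_quadrant_decomposition {X : Type*} [MeasurableSpace X] (μ : Measure X)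
    [IsProbabilityMeasure μ] {f g : X → ℝ} (hf : Measurable f) (hg : Measurable g) :
    ∃ (m₁ m₂ : ℝ) (ν₁ ν₂ ν₃ ν₄ : Measure X), IsFiniteMeasure ν₁ ∧ IsFiniteMeasure ν₂ ∧
      IsFiniteMeasure ν₃ ∧ IsFiniteMeasure ν₄ ∧ μ = ν₁ + ν₃ + (ν₂ + ν₄) ∧
      ν₁ univ = ν₃ univ ∧ ν₂ univ = ν₄ univ ∧
      (∀ᵐ x ∂ν₁, m₁ ≤ f x ∧ m₂ ≤ g x) ∧ (∀ᵐ x ∂ν₂, f x ≤ m₁ ∧ m₂ ≤ g x) ∧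
      (∀ᵐ x ∂ν₃, f x ≤ m₁ ∧ g x ≤ m₂) ∧ (∀ᵐ x ∂ν₄, m₁ ≤ f x ∧ g x ≤ m₂) := by
  obtain ⟨m₁, hf₁, hf₁'⟩ := exists_median μ hf
  obtain ⟨m₂, hg₂, hg₂'⟩ := exists_median μ hg
  have hA₁ : MeasurableSet {x | f x < m₁} := measurableSet_lt hf measurable_const
  have hB₁ : MeasurableSet {x | f x ≤ m₁} := measurableSet_le hf measurable_const
  have hAB₁ : {x | f x < m₁} ⊆ {x | f x ≤ m₁} := fun x (hx : f x < m₁) => hx.le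
  -- cut `μ` into a lower and an upper half along `g = m₂`, then each half along `f = m₁`
  obtain ⟨μB, μT, hμ, hμB, hμB₂, hμT₂, _, _⟩ := μ.exists_eq_add_of_le_of_le
    (measurableSet_lt hg measurable_const) (measurableSet_le hg measurable_const)
    (fun x (hx : g x < m₂) => hx.le) hg₂ hg₂'
  have hμT : μT univ = 1 / 2 := by
    have h : μB univ + μT univ = 1 := by rw [← Measure.add_apply, ← hμ, measure_univ]
    rw [hμB] at h
    exact (ENNReal.add_right_inj (by simp)).1 (h.trans (ENNReal.add_halves 1).symm)
  -- `s₁ + s₂ = 1 / 2` for the masses of the left parts of the two halves is what balances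
  -- opposite quadrants
  obtain ⟨s₁, s₂, hs, hs₁, hs₁', hs₂, hs₂'⟩ := ENNReal.exists_add_eq_of_le_of_le
    (x₁ := μT {x | f x < m₁}) (x₂ := μB {x | f x < m₁}) (m := 1 / 2) (by simp)
    (measure_mono hAB₁) (measure_mono hAB₁)
    (by rwa [add_comm, ← Measure.add_apply, ← hμ]) (by rwa [add_comm, ← Measure.add_apply, ← hμ])
  obtain ⟨ν₂, ν₁, hT, hν₂, hν₂B, hν₁A, _, _⟩ := μT.exists_eq_add_of_le_of_le hA₁ hB₁ hAB₁ hs₁ hs₁'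
  obtain ⟨ν₃, ν₄, hB, hν₃, hν₃B, hν₄A, _, _⟩ := μB.exists_eq_add_of_le_of_le hA₁ hB₁ hAB₁ hs₂ hs₂'
  refine ⟨m₁, m₂, ν₁, ν₂, ν₃, ν₄, ‹_›, ‹_›, ‹_›, ‹_›, by rw [hμ, hT, hB]; abel, ?_, ?_,
    ?_, ?_, ?_, ?_⟩
  · rw [hν₃]
    refine (ENNReal.add_right_inj (ne_top_of_le_ne_top (by simp) (hs ▸ le_self_add))).1 ?_
    rw [hs, ← hν₂, ← Measure.add_apply, ← hT, hμT]
  · rw [hν₂]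
    refine (ENNReal.add_right_inj (ne_top_of_le_ne_top (by simp) (hs ▸ le_add_self))).1 ?_
    rw [add_comm s₂, hs, ← hν₃, ← Measure.add_apply, ← hB, hμB]
  · filter_upwards [hν₁A, (ae_add_measure_iff.1 (hT ▸ hμT₂)).2] with x h₁ h₂
    exact ⟨not_lt.1 h₁, not_lt.1 h₂⟩
  · filter_upwards [hν₂B, (ae_add_measure_iff.1 (hT ▸ hμT₂)).1] with x h₁ h₂
    exact ⟨h₁, not_lt.1 h₂⟩
  · filter_upwards [hν₃B, (ae_add_measure_iff.1 (hB ▸ hμB₂)).1] with x h₁ h₂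
    exact ⟨h₁, h₂⟩
  · filter_upwards [hν₄A, (ae_add_measure_iff.1 (hB ▸ hμB₂)).2] with x h₁ h₂
    exact ⟨not_lt.1 h₁, h₂⟩

open Measure in
theorem exists_swap_invariant_coupling_across_medians {X : Type*} [MeasurableSpace X]
    (μ : Measure X) [IsProbabilityMeasure μ] {f g : X → ℝ} (hf : Measurable f)
    (hg : Measurable g) :
    ∃ (m₁ m₂ : ℝ) (ρ : Measure (X × X)), ρ.map Prod.fst = μ ∧ ρ.map Prod.snd = μ ∧
      ρ.map Prod.swap = ρ ∧
      ∀ᵐ z ∂ρ, (f z.1 - m₁) * (f z.2 - m₁) ≤ 0 ∧ (g z.1 - m₂) * (g z.2 - m₂) ≤ 0 := by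
  obtain ⟨m₁, m₂, ν₁, ν₂, ν₃, ν₄, _, _, _, _, hμ, h₁₃, h₂₄, hν₁, hν₂, hν₃, hν₄⟩ :=
    exists_quadrant_decomposition μ hf hg
  refine ⟨m₁, m₂, symmProd ν₁ ν₃ + symmProd ν₂ ν₄, ?_, ?_, ?_, ?_⟩
  · rw [Measure.map_add _ _ measurable_fst, map_fst_symmProd h₁₃ (measure_ne_top _ _),
      map_fst_symmProd h₂₄ (measure_ne_top _ _), hμ]
  · rw [Measure.map_add _ _ measurable_snd, map_snd_symmProd h₁₃ (measure_ne_top _ _),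
      map_snd_symmProd h₂₄ (measure_ne_top _ _), hμ]
  · rw [Measure.map_add _ _ measurable_swap, map_swap_symmProd, map_swap_symmProd]
  · rw [ae_add_measure_iff]
    constructor
    · filter_upwards [ae_symmProd hν₁ hν₃] with z hz
      rcases hz with ⟨⟨h₁, h₂⟩, h₃, h₄⟩ | ⟨⟨h₁, h₂⟩, h₃, h₄⟩ <;> constructor <;> nlinarith
    · filter_upwards [ae_symmProd hν₂ hν₄] with z hz
      rcases hz with ⟨⟨h₁, h₂⟩, h₃, h₄⟩ | ⟨⟨h₁, h₂⟩, h₃, h₄⟩ <;> constructor <;> nlinarith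

/-- **Coupling lemma for complex laws.** For every Borel probability measure `μ` on `ℂ`
there exist `a ∈ ℂ` and a Borel probability measure `ρ` on `ℂ × ℂ` whose marginals are
both `μ`, which is invariant under the coordinate swap, and which gives full measure to
`{(x,y) : |x − y| ≥ ½(|x − a| + |y − a|)}`. -/
theorem swap_invariant_coupling_complex
    (μ : Measure ℂ) (hμ : IsProbabilityMeasure μ) :
    ∃ (a : ℂ) (ρ : Measure (ℂ × ℂ)), IsProbabilityMeasure ρ ∧
      ρ.map Prod.fst = μ ∧ ρ.map Prod.snd = μ ∧
      ρ.map Prod.swap = ρ ∧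
      ρ {p : ℂ × ℂ |
        (1 / 2) * (‖p.1 - a‖ + ‖p.2 - a‖) ≤
          ‖p.1 - p.2‖} = 1 := by
  obtain ⟨m₁, m₂, ρ, hfst, hsnd, hswap, hρ⟩ :=
    exists_swap_invariant_coupling_across_medians μ Complex.measurable_re Complex.measurable_im
  have : IsProbabilityMeasure (ρ.map Prod.fst) := hfst ▸ hμ
  have : IsProbabilityMeasure ρ := Measure.isProbabilityMeasure_of_map Prod.fst
  refine ⟨⟨m₁, m₂⟩, ρ, this, hfst, hsnd, hswap, ?_⟩
  rw [← measure_univ (μ := ρ), ← ae_iff_measure_eq (measurableSet_le (by fun_prop)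
    (by fun_prop)).nullMeasurableSet]
  filter_upwards [hρ] with z hz using Complex.half_add_norm_le_norm_sub hz.1 hz.2
end
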